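/- arXiv:1312.0729 — 6 statements merged into one kernel-verified Lean document; each statement's English description precedes it below -/
import Mathlib

section
/- In any intersection representation of the claw K_{1,3} by unit intervals (closed, open, or half-open intervals of length 1), the interval assigned to the center vertex has the form [t,t+1] or (t,t+1] or [t,t+1) or (t,t+1), and the three leaf intervals have left endpoints t-1, t, and t+1 respectively (after suitable ordering); in particular, one leaf interval shares exactly the point t with the center region on the left, one leaf interval is the open or half-open interval nested at the same position as the center, and one leaf interval shares exactly the point t+1 on the right. -/
open Set

/-- A unit interval of the real line: one of the four types of intervals of length 1. -/
def IsUnitInterval (s : Set ℝ) : Prop :=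
  ∃ x : ℝ, s = Set.Icc x (x + 1) ∨ s = Set.Ioo x (x + 1) ∨
    s = Set.Ioc x (x + 1) ∨ s = Set.Ico x (x + 1)

/-- `f` is an intersection representation of `G`: distinct vertices are adjacent iff
their assigned sets intersect. -/
def IsIntervalRep {V : Type*} (G : SimpleGraph V) (f : V → Set ℝ) : Prop :=
  ∀ u v : V, u ≠ v → (G.Adj u v ↔ (f u ∩ f v).Nonempty)

/-- A mixed unit interval graph: intersection graph of unit intervals of any of the four types. -/
def MixedUnitIntervalGraph {V : Type*} (G : SimpleGraph V) : Prop :=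
  ∃ f : V → Set ℝ, IsIntervalRep G f ∧ ∀ v, IsUnitInterval (f v)

/-- `G` contains an induced subgraph isomorphic to `H`. -/
def HasInducedSubgraph {V W : Type*} (G : SimpleGraph V) (H : SimpleGraph W) : Prop :=
  ∃ f : W ↪ V, ∀ a b : W, H.Adj a b ↔ G.Adj (f a) (f b)

/-- `G` is an interval graph (intersection graph of closed real intervals). -/
def IsIntervalGraph {V : Type*} (G : SimpleGraph V) : Prop :=
  ∃ f : V → Set ℝ, IsIntervalRep G f ∧ ∀ v, ∃ a b : ℝ, f v = Set.Icc a b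

/-- `G` is twin-free: distinct vertices have distinct closed neighborhoods. -/
def TwinFree {V : Type*} (G : SimpleGraph V) : Prop :=
  ∀ u v : V, insert u (G.neighborSet u) = insert v (G.neighborSet v) → u = v

/-- The claw K_{1,3} with center 0 and leaves 1,2,3. -/
def K13 : SimpleGraph (Fin 4) := SimpleGraph.fromRel (fun u v => u = 0 ∧ v ≠ 0)


abbrev UForm (s : Set ℝ) (x : ℝ) : Prop :=
  s = Set.Icc x (x + 1) ∨ s = Set.Ioo x (x + 1) ∨
    s = Set.Ioc x (x + 1) ∨ s = Set.Ico x (x + 1)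

lemma usub {s : Set ℝ} {x : ℝ} (h : UForm s x) : s ⊆ Set.Icc x (x + 1) := by
  rcases h with h|h|h|h <;> subst h
  · exact subset_rfl
  · exact Ioo_subset_Icc_self
  · exact Ioc_subset_Icc_self
  · exact Ico_subset_Icc_self

lemma usup {s : Set ℝ} {x : ℝ} (h : UForm s x) : Set.Ioo x (x + 1) ⊆ s := by
  rcases h with h|h|h|h <;> subst h
  · exact Ioo_subset_Icc_self
  · exact subset_rfl
  · exact Ioo_subset_Ioc_self
  · exact Ioo_subset_Ico_self

lemma gap {s u : Set ℝ} {x y : ℝ} (hs : UForm s x) (hu : UForm u y)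
    (hle : x ≤ y) (hd : ¬ (s ∩ u).Nonempty) : x + 1 ≤ y := by
  by_contra h
  push_neg at h
  exact hd ⟨(y + (x + 1)) / 2, usup hs ⟨by linarith, by linarith⟩,
    usup hu ⟨by linarith, by linarith⟩⟩

lemma near {s u : Set ℝ} {x y : ℝ} (hs : UForm s x) (hu : UForm u y)
    (hn : (s ∩ u).Nonempty) : y - 1 ≤ x ∧ x ≤ y + 1 := by
  obtain ⟨z, hz1, hz2⟩ := hn
  obtain ⟨a1, a2⟩ := usub hs hz1
  obtain ⟨b1, b2⟩ := usub hu hz2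
  constructor <;> linarith

lemma typeR {s : Set ℝ} {x : ℝ} (h : UForm s x) (hm : x + 1 ∈ s) :
    s = Set.Icc x (x + 1) ∨ s = Set.Ioc x (x + 1) := by
  rcases h with h|h|h|h <;> subst h <;> simp at hm ⊢

lemma typeL {s : Set ℝ} {x : ℝ} (h : UForm s x) (hm : x ∈ s) :
    s = Set.Icc x (x + 1) ∨ s = Set.Ico x (x + 1) := by
  rcases h with h|h|h|h <;> subst h <;> simp at hm ⊢

lemma typeO {s : Set ℝ} {x : ℝ} (h : UForm s x) (hm : x ∉ s) (hm2 : x + 1 ∉ s) :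
    s = Set.Ioo x (x + 1) := by
  rcases h with h|h|h|h <;> subst h <;> simp at hm hm2 ⊢ <;> linarith

lemma key {s0 s1 s2 s3 : Set ℝ} {x0 x1 x2 x3 : ℝ}
    (h0 : UForm s0 x0) (h1 : UForm s1 x1) (h2 : UForm s2 x2) (h3 : UForm s3 x3)
    (n1 : (s0 ∩ s1).Nonempty) (n2 : (s0 ∩ s2).Nonempty) (n3 : (s0 ∩ s3).Nonempty)
    (d12 : ¬ (s1 ∩ s2).Nonempty) (d13 : ¬ (s1 ∩ s3).Nonempty) (d23 : ¬ (s2 ∩ s3).Nonempty)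
    (o12 : x1 ≤ x2) (o23 : x2 ≤ x3) :
    ∃ x : ℝ, s0 = Set.Icc (x + 1) (x + 2) ∧
      (s1 = Set.Icc x (x + 1) ∨ s1 = Set.Ioc x (x + 1)) ∧
      s2 = Set.Ioo (x + 1) (x + 2) ∧
      (s3 = Set.Icc (x + 2) (x + 3) ∨ s3 = Set.Ico (x + 2) (x + 3)) := by
  have g12 := gap h1 h2 o12 d12
  have g23 := gap h2 h3 o23 d23
  have r1 := near h0 h1 n1
  have r3 := near h0 h3 n3
  have e1 : x1 = x0 - 1 := by linarith [r1.1, r1.2, r3.1, r3.2]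
  have e3 : x3 = x0 + 1 := by linarith [r1.1, r1.2, r3.1, r3.2]
  have e2 : x2 = x0 := by linarith [r1.1, r1.2, r3.1, r3.2]
  rw [e1] at h1; rw [e2] at h2; rw [e3] at h3
  obtain ⟨z, hz0, hz1⟩ := n1
  have hz0' := usub h0 hz0
  have hz1' := usub h1 hz1
  have hzx : z = x0 := le_antisymm (by linarith [hz1'.2]) hz0'.1
  rw [hzx] at hz0 hz1
  obtain ⟨w, hw0, hw3⟩ := n3
  have hw0' := usub h0 hw0
  have hw3' := usub h3 hw3
  have hwx : w = x0 + 1 := le_antisymm hw0'.2 hw3'.1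
  rw [hwx] at hw0 hw3
  have hs0 : s0 = Set.Icc x0 (x0 + 1) := by
    rcases typeL h0 hz0 with h|h
    · exact h
    · exact absurd (h ▸ hw0) (by simp)
  have hs1 := typeR h1 (by rw [show x0 - 1 + 1 = x0 by ring]; exact hz1)
  have hs3 := typeL h3 hw3
  have hx02 : x0 ∉ s2 := fun h => d12 ⟨x0, hz1, h⟩
  have hx12 : x0 + 1 ∉ s2 := fun h => d23 ⟨x0 + 1, h, hw3⟩
  have hs2 := typeO h2 hx02 hx12
  refine ⟨x0 - 1, ?_, ?_, ?_, ?_⟩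
  · rw [show x0 - 1 + 1 = x0 by ring, show x0 - 1 + 2 = x0 + 1 by ring]; exact hs0
  · exact hs1
  · rw [show x0 - 1 + 1 = x0 by ring, show x0 - 1 + 2 = x0 + 1 by ring]; exact hs2
  · rw [show x0 - 1 + 2 = x0 + 1 by ring, show x0 - 1 + 3 = x0 + 1 + 1 by ring]; exact hs3

/-- Every mixed unit interval representation of the claw is, up to translation, the one
assigning [1,2] to the center, and to the leaves: [0,1] or (0,1]; (1,2); and [2,3] or [2,3). -/
theorem claw_representation (f : Fin 4 → Set ℝ)
    (hrep : IsIntervalRep K13 f) (hunit : ∀ v, IsUnitInterval (f v)) :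
    ∃ x : ℝ, ∃ a b c : Fin 4, a ≠ 0 ∧ b ≠ 0 ∧ c ≠ 0 ∧ a ≠ b ∧ a ≠ c ∧ b ≠ c ∧
      f 0 = Set.Icc (x + 1) (x + 2) ∧
      (f a = Set.Icc x (x + 1) ∨ f a = Set.Ioc x (x + 1)) ∧
      f b = Set.Ioo (x + 1) (x + 2) ∧
      (f c = Set.Icc (x + 2) (x + 3) ∨ f c = Set.Ico (x + 2) (x + 3)) := by
  have hu : ∀ v, ∃ x : ℝ, UForm (f v) x := hunit
  obtain ⟨x0, F0⟩ := hu 0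
  obtain ⟨y1, F1⟩ := hu 1
  obtain ⟨y2, F2⟩ := hu 2
  obtain ⟨y3, F3⟩ := hu 3
  have N1 : (f 0 ∩ f 1).Nonempty := (hrep 0 1 (by decide)).mp (by simp [K13])
  have N2 : (f 0 ∩ f 2).Nonempty := (hrep 0 2 (by decide)).mp (by simp [K13])
  have N3 : (f 0 ∩ f 3).Nonempty := (hrep 0 3 (by decide)).mp (by simp [K13])
  have D12 : ¬ (f 1 ∩ f 2).Nonempty := fun h =>
    (by simp [K13] : ¬ K13.Adj 1 2) ((hrep 1 2 (by decide)).mpr h)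
  have D13 : ¬ (f 1 ∩ f 3).Nonempty := fun h =>
    (by simp [K13] : ¬ K13.Adj 1 3) ((hrep 1 3 (by decide)).mpr h)
  have D23 : ¬ (f 2 ∩ f 3).Nonempty := fun h =>
    (by simp [K13] : ¬ K13.Adj 2 3) ((hrep 2 3 (by decide)).mpr h)
  have D21 : ¬ (f 2 ∩ f 1).Nonempty := fun h => D12 (by rwa [Set.inter_comm] at h)
  have D31 : ¬ (f 3 ∩ f 1).Nonempty := fun h => D13 (by rwa [Set.inter_comm] at h)
  have D32 : ¬ (f 3 ∩ f 2).Nonempty := fun h => D23 (by rwa [Set.inter_comm] at h)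
  rcases le_total y1 y2 with h12 | h21 <;> rcases le_total y2 y3 with h23 | h32 <;>
    rcases le_total y1 y3 with h13 | h31
  · obtain ⟨x, hA, hB, hC, hD⟩ := key F0 F1 F2 F3 N1 N2 N3 D12 D13 D23 h12 h23
    exact ⟨x, 1, 2, 3, by decide, by decide, by decide, by decide, by decide, by decide,
      hA, hB, hC, hD⟩
  · obtain ⟨x, hA, hB, hC, hD⟩ := key F0 F1 F2 F3 N1 N2 N3 D12 D13 D23 h12 h23
    exact ⟨x, 1, 2, 3, by decide, by decide, by decide, by decide, by decide, by decide,
      hA, hB, hC, hD⟩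
  · obtain ⟨x, hA, hB, hC, hD⟩ := key F0 F1 F3 F2 N1 N3 N2 D13 D12 D32 h13 h32
    exact ⟨x, 1, 3, 2, by decide, by decide, by decide, by decide, by decide, by decide,
      hA, hB, hC, hD⟩
  · obtain ⟨x, hA, hB, hC, hD⟩ := key F0 F3 F1 F2 N3 N1 N2 D31 D32 D12 h31 h12
    exact ⟨x, 3, 1, 2, by decide, by decide, by decide, by decide, by decide, by decide,
      hA, hB, hC, hD⟩
  · obtain ⟨x, hA, hB, hC, hD⟩ := key F0 F2 F1 F3 N2 N1 N3 D21 D23 D13 h21 h13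
    exact ⟨x, 2, 1, 3, by decide, by decide, by decide, by decide, by decide, by decide,
      hA, hB, hC, hD⟩
  · obtain ⟨x, hA, hB, hC, hD⟩ := key F0 F2 F3 F1 N2 N3 N1 D23 D21 D31 h23 h31
    exact ⟨x, 2, 3, 1, by decide, by decide, by decide, by decide, by decide, by decide,
      hA, hB, hC, hD⟩
  · obtain ⟨x, hA, hB, hC, hD⟩ := key F0 F2 F1 F3 N2 N1 N3 D21 D23 D13 h21 h13
    exact ⟨x, 2, 1, 3, by decide, by decide, by decide, by decide, by decide, by decide,
      hA, hB, hC, hD⟩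
  · obtain ⟨x, hA, hB, hC, hD⟩ := key F0 F3 F2 F1 N3 N2 N1 D32 D31 D21 h32 h21
    exact ⟨x, 3, 2, 1, by decide, by decide, by decide, by decide, by decide, by decide,
      hA, hB, hC, hD⟩
end

section
/- The graph T_{0,0}, obtained from a path v1 v2 v3 v4 by adding two nonadjacent vertices a and b each adjacent to both v2 and v3, has no intersection representation by unit intervals (closed, open, or half-open intervals of length 1). -/
open Set

/-- T_{0,0}: a path 0-1-2-3 together with two nonadjacent vertices 4 and 5,
each adjacent to both 1 and 2. -/
def T00 : SimpleGraph (Fin 6) := SimpleGraph.fromRel (fun u v =>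
  (u = 0 ∧ v = 1) ∨ (u = 1 ∧ v = 2) ∨ (u = 2 ∧ v = 3) ∨
  (u = 4 ∧ (v = 1 ∨ v = 2)) ∨ (u = 5 ∧ (v = 1 ∨ v = 2)))


private lemma unit_bounds {s : Set ℝ} (h : ∃ x : ℝ, s = Set.Icc x (x + 1) ∨ s = Set.Ioo x (x + 1) ∨
    s = Set.Ioc x (x + 1) ∨ s = Set.Ico x (x + 1)) :
    ∃ x : ℝ, s ⊆ Set.Icc x (x + 1) ∧ Set.Ioo x (x + 1) ⊆ s := by
  obtain ⟨x, h | h | h | h⟩ := h <;> subst h <;> exact ⟨x, by first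
    | exact ⟨subset_rfl, Set.Ioo_subset_Icc_self⟩
    | exact ⟨Set.Ioo_subset_Icc_self, subset_rfl⟩
    | exact ⟨Set.Ioc_subset_Icc_self, Set.Ioo_subset_Ioc_self⟩
    | exact ⟨Set.Ico_subset_Icc_self, Set.Ioo_subset_Ico_self⟩⟩

private lemma conv_of {s : Set ℝ} {x : ℝ} (h1 : s ⊆ Set.Icc x (x + 1))
    (h2 : Set.Ioo x (x + 1) ⊆ s) {a b t : ℝ} (ha : a ∈ s) (hb : b ∈ s)
    (hat : a ≤ t) (htb : t ≤ b) : t ∈ s := by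
  rcases eq_or_lt_of_le hat with rfl | hat
  · exact ha
  rcases eq_or_lt_of_le htb with rfl | htb
  · exact hb
  exact h2 ⟨lt_of_le_of_lt (h1 ha).1 hat, lt_of_lt_of_le htb (h1 hb).2⟩

private lemma aux (A B C D P Q : Set ℝ) (xa xb xc xp xq : ℝ)
    (hA1 : A ⊆ Set.Icc xa (xa + 1))
    (hB1 : B ⊆ Set.Icc xb (xb + 1)) (hB2 : Set.Ioo xb (xb + 1) ⊆ B)
    (hC1 : C ⊆ Set.Icc xc (xc + 1)) (hC2 : Set.Ioo xc (xc + 1) ⊆ C)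
    (hP1 : P ⊆ Set.Icc xp (xp + 1)) (hP2 : Set.Ioo xp (xp + 1) ⊆ P)
    (hQ1 : Q ⊆ Set.Icc xq (xq + 1)) (hQ2 : Set.Ioo xq (xq + 1) ⊆ Q)
    (hBP : (B ∩ P).Nonempty) (hBQ : (B ∩ Q).Nonempty)
    (hCP : (C ∩ P).Nonempty) (hCQ : (C ∩ Q).Nonempty)
    (hAB : (A ∩ B).Nonempty) (hCD : (C ∩ D).Nonempty)
    (hPQ : ∀ t, t ∈ P → t ∉ Q) (hAC : ∀ t, t ∈ A → t ∉ C)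
    (hAP : ∀ t, t ∈ A → t ∉ P) (hAQ : ∀ t, t ∈ A → t ∉ Q)
    (hDB : ∀ t, t ∈ D → t ∉ B) (hDP : ∀ t, t ∈ D → t ∉ P)
    (hDQ : ∀ t, t ∈ D → t ∉ Q)
    (h45 : xp + 1 ≤ xq) : False := by
  obtain ⟨p, hpB, hpP⟩ := hBP
  obtain ⟨q, hqB, hqQ⟩ := hBQ
  obtain ⟨p', hpC, hpP'⟩ := hCP
  obtain ⟨q', hqC, hqQ'⟩ := hCQ
  obtain ⟨r, hrA, hrB⟩ := hAB
  obtain ⟨s, hsC, hsD⟩ := hCD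
  have hpb := hB1 hpB; have hqb := hB1 hqB
  have hpc := hC1 hpC; have hqc := hC1 hqC
  have hpp := hP1 hpP; have hpp' := hP1 hpP'
  have hqq := hQ1 hqQ; have hqq' := hQ1 hqQ'
  have hra := hA1 hrA; have hrb := hB1 hrB
  have hsc := hC1 hsC
  -- [xp+1, xq] ⊆ B and ⊆ C
  have hIB : ∀ t, xp + 1 ≤ t → t ≤ xq → t ∈ B := fun t h1 h2 =>
    conv_of hB1 hB2 hpB hqB (by linarith [hpp.2]) (by linarith [hqq.1])
  have hIC : ∀ t, xp + 1 ≤ t → t ≤ xq → t ∈ C := fun t h1 h2 =>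
    conv_of hC1 hC2 hpC hqC (by linarith [hpp'.2]) (by linarith [hqq'.1])
  -- every point of A and D is ≤ xp or ≥ xq+1
  have hA' : ∀ t, t ∈ A → t ≤ xp ∨ xq + 1 ≤ t := by
    intro t ht
    by_contra hcon
    push_neg at hcon
    obtain ⟨h1, h2⟩ := hcon
    rcases lt_or_ge t (xp + 1) with h | h
    · exact hAP t ht (hP2 ⟨h1, h⟩)
    rcases le_or_gt t xq with h' | h'
    · exact hAC t ht (hIC t h h')
    · exact hAQ t ht (hQ2 ⟨h', h2⟩)
  have hD' : ∀ t, t ∈ D → t ≤ xp ∨ xq + 1 ≤ t := by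
    intro t ht
    by_contra hcon
    push_neg at hcon
    obtain ⟨h1, h2⟩ := hcon
    rcases lt_or_ge t (xp + 1) with h | h
    · exact hDP t ht (hP2 ⟨h1, h⟩)
    rcases le_or_gt t xq with h' | h'
    · exact hDB t ht (hIB t h h')
    · exact hDQ t ht (hQ2 ⟨h', h2⟩)
  rcases hA' r hrA with hr | hr
  · -- r ≤ xp, so r = xp, q = xq = xp + 1
    have hq5 : q = xp + 1 := by linarith [hrb.1, hqb.2, hqq.1]
    have hrxp : r = xp := by linarith [hrb.1, hqb.2, hqq.1]
    have hxpP : xp ∉ P := hrxp ▸ hAP r hrA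
    have hxp1P : xp + 1 ∉ P := fun h => hPQ _ h (hq5 ▸ hqQ)
    rcases hD' s hsD with hs | hs
    · -- s ≤ xp
      have hq'5 : q' = xp + 1 := by linarith [hsc.1, hqq'.1, hqc.2]
      have hsxp : s = xp := by linarith [hsc.1, hqq'.1, hqc.2]
      exact hAC r hrA (by rw [hrxp, ← hsxp]; exact hsC)
    · -- s ≥ xq + 1 ≥ xp + 2
      have : p' < xp + 1 := lt_of_le_of_ne hpp'.2 (fun e => hxp1P (e ▸ hpP'))
      linarith [hpc.1, hsc.2]
  · -- r ≥ xq + 1, so p = xq = xp + 1, r = xq + 1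
    have hp5 : p = xq := by linarith [hrb.2, hpb.1, hpp.2]
    have hrxq : r = xq + 1 := by linarith [hrb.2, hpb.1, hpp.2]
    have hxqQ : xq ∉ Q := hp5 ▸ hPQ p hpP
    have hxq1Q : xq + 1 ∉ Q := hrxq ▸ hAQ r hrA
    rcases hD' s hsD with hs | hs
    · -- s ≤ xp = xq - 1
      have : xq < q' := lt_of_le_of_ne hqq'.1 (fun e => hxqQ (e ▸ hqQ'))
      linarith [hsc.1, hqc.2]
    · -- s ≥ xq + 1
      have hsxq : s = xq + 1 := by linarith [hsc.2, hpc.1, hpp'.2, hsc.1]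
      exact hAC r hrA (by rw [hrxq, ← hsxq]; exact hsC)

/-- T_{0,0} is not a mixed unit interval graph. -/
theorem T00_not_mixed_unit : ¬ MixedUnitIntervalGraph T00 := by
  rintro ⟨f, rep, hunit⟩
  have hdisj : ∀ u v : Fin 6, u ≠ v → ¬T00.Adj u v → ∀ t, t ∈ f u → t ∉ f v :=
    fun u v h hn t ht ht' => hn ((rep u v h).mpr ⟨t, ht, ht'⟩)
  obtain ⟨x0, h01, h02⟩ := unit_bounds (hunit 0)
  obtain ⟨x1, h11, h12⟩ := unit_bounds (hunit 1)
  obtain ⟨x2, h21, h22⟩ := unit_bounds (hunit 2)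
  obtain ⟨x3, h31, h32⟩ := unit_bounds (hunit 3)
  obtain ⟨x4, h41, h42⟩ := unit_bounds (hunit 4)
  obtain ⟨x5, h51, h52⟩ := unit_bounds (hunit 5)
  have n14 : (f 1 ∩ f 4).Nonempty := (rep 1 4 (by decide)).mp (by simp [T00])
  have n15 : (f 1 ∩ f 5).Nonempty := (rep 1 5 (by decide)).mp (by simp [T00])
  have n24 : (f 2 ∩ f 4).Nonempty := (rep 2 4 (by decide)).mp (by simp [T00])
  have n25 : (f 2 ∩ f 5).Nonempty := (rep 2 5 (by decide)).mp (by simp [T00])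
  have n01 : (f 0 ∩ f 1).Nonempty := (rep 0 1 (by decide)).mp (by simp [T00])
  have n23 : (f 2 ∩ f 3).Nonempty := (rep 2 3 (by decide)).mp (by simp [T00])
  have d45 : ∀ t, t ∈ f 4 → t ∉ f 5 := hdisj 4 5 (by decide) (by simp [T00])
  have d02 : ∀ t, t ∈ f 0 → t ∉ f 2 := hdisj 0 2 (by decide) (by simp [T00])
  have d04 : ∀ t, t ∈ f 0 → t ∉ f 4 := hdisj 0 4 (by decide) (by simp [T00])
  have d05 : ∀ t, t ∈ f 0 → t ∉ f 5 := hdisj 0 5 (by decide) (by simp [T00])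
  have d31 : ∀ t, t ∈ f 3 → t ∉ f 1 := hdisj 3 1 (by decide) (by simp [T00])
  have d34 : ∀ t, t ∈ f 3 → t ∉ f 4 := hdisj 3 4 (by decide) (by simp [T00])
  have d35 : ∀ t, t ∈ f 3 → t ∉ f 5 := hdisj 3 5 (by decide) (by simp [T00])
  have hsep : x4 + 1 ≤ x5 ∨ x5 + 1 ≤ x4 := by
    by_contra h
    push_neg at h
    obtain ⟨h1, h2⟩ := h
    exact d45 ((x4 + x5 + 1) / 2)
      (h42 ⟨by linarith, by linarith⟩) (h52 ⟨by linarith, by linarith⟩)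
  rcases hsep with hle | hle
  · exact aux (f 0) (f 1) (f 2) (f 3) (f 4) (f 5) x0 x1 x2 x4 x5
      h01 h11 h12 h21 h22 h41 h42 h51 h52
      n14 n15 n24 n25 n01 n23
      d45 d02 d04 d05 d31 d34 d35 hle
  · exact aux (f 0) (f 1) (f 2) (f 3) (f 5) (f 4) x0 x1 x2 x5 x4
      h01 h11 h12 h21 h22 h51 h52 h41 h42
      n15 n14 n25 n24 n01 n23
      (fun t ht ht' => d45 t ht' ht) d02 d05 d04 d31 d35 d34 hle
end

section
/- If G is an interval graph with a closed-interval representation I minimizing the number of bad pairs, and (u,v) is a bad pair of I, then there exist vertices x and y of G with ℓ(v) ≤ r(x) < ℓ(u) and r(u) < ℓ(y) ≤ r(v). -/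
open Set

/-- Claim 1: if a closed-interval representation of an interval graph minimizes the number of
bad pairs and (u,v) is a bad pair, then there are vertices x, y with
l(v) <= r(x) < l(u) and r(u) < l(y) <= r(v). -/
lemma bpw_inter_iff {a b c d : ℝ} (h1 : a ≤ b) (h2 : c ≤ d) :
    (Set.Icc a b ∩ Set.Icc c d).Nonempty ↔ a ≤ d ∧ c ≤ b := by
  rw [Set.Icc_inter_Icc, Set.nonempty_Icc, sup_le_iff, le_inf_iff, le_inf_iff]
  exact ⟨fun h => ⟨h.1.2, h.2.1⟩, fun h => ⟨⟨h1, h.1⟩, h.2, h2⟩⟩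

def bpwBset {V : Type*} (l r : V → ℝ) : Set (V × V) :=
  {p : V × V | p.1 ≠ p.2 ∧ Set.Icc (l p.1) (r p.1) ⊆ Set.Icc (l p.2) (r p.2)}

lemma bpw_mem_bset {V : Type*} {l r : V → ℝ} (hle : ∀ v, l v ≤ r v) (a b : V) :
    (a, b) ∈ bpwBset l r ↔ a ≠ b ∧ l b ≤ l a ∧ r a ≤ r b := by
  unfold bpwBset
  rw [Set.mem_setOf_eq, Set.Icc_subset_Icc_iff (hle a)]

lemma bpw_rep_iff {V : Type*} (G : SimpleGraph V) {l r : V → ℝ} (hle : ∀ v, l v ≤ r v) :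
    IsIntervalRep G (fun v => Set.Icc (l v) (r v)) ↔
      ∀ a b : V, a ≠ b → (G.Adj a b ↔ (l a ≤ r b ∧ l b ≤ r a)) := by
  refine forall_congr' fun a => forall_congr' fun b => imp_congr_right fun hab => ?_
  exact iff_congr Iff.rfl (bpw_inter_iff (hle a) (hle b))

lemma bpw_count_lt {V : Type*} [Fintype V] (l r l' r' : V → ℝ) (u v : V)
    (huv : (u, v) ∈ bpwBset l r) (φ : V × V → V × V)
    (hmap : ∀ p ∈ bpwBset l' r', φ p ∈ bpwBset l r ∧ φ p ≠ (u, v))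
    (hinj : Set.InjOn φ (bpwBset l' r')) :
    (bpwBset l' r').ncard < (bpwBset l r).ncard := by
  have h1 : (bpwBset l' r').ncard ≤ (bpwBset l r \ {(u, v)}).ncard :=
    Set.ncard_le_ncard_of_injOn φ
      (fun p hp => Set.mem_diff_singleton.mpr ⟨(hmap p hp).1, (hmap p hp).2⟩) hinj
      (Set.toFinite _)
  exact lt_of_le_of_lt h1 (Set.ncard_diff_singleton_lt_of_mem huv (Set.toFinite _))

lemma bpw_exists_above {V : Type*} [Fintype V] (b : ℝ) (l r : V → ℝ) :
    ∃ s : ℝ, b < s ∧ ∀ w : V, (b < l w → s < l w) ∧ (b < r w → s < r w) := by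
  classical
  set E : Finset ℝ := ((Finset.univ.image l ∪ Finset.univ.image r).filter (fun c => b < c)) with hE
  have hmeml : ∀ w : V, b < l w → l w ∈ E := fun w hw => by
    rw [hE, Finset.mem_filter]
    exact ⟨Finset.mem_union_left _ (Finset.mem_image_of_mem l (Finset.mem_univ w)), hw⟩
  have hmemr : ∀ w : V, b < r w → r w ∈ E := fun w hw => by
    rw [hE, Finset.mem_filter]
    exact ⟨Finset.mem_union_right _ (Finset.mem_image_of_mem r (Finset.mem_univ w)), hw⟩
  by_cases hne : E.Nonempty
  · have hb : b < E.min' hne := (Finset.mem_filter.mp (E.min'_mem hne)).2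
    refine ⟨(b + E.min' hne) / 2, by linarith, fun w => ⟨fun hw => ?_, fun hw => ?_⟩⟩
    · have := E.min'_le _ (hmeml w hw); linarith
    · have := E.min'_le _ (hmemr w hw); linarith
  · refine ⟨b + 1, by linarith, fun w => ⟨fun hw => absurd ⟨_, hmeml w hw⟩ hne,
      fun hw => absurd ⟨_, hmemr w hw⟩ hne⟩⟩

lemma bpw_neq_r {V : Type*} [Fintype V] (G : SimpleGraph V)
    (l r : V → ℝ) (hle : ∀ v, l v ≤ r v)
    (hrep : IsIntervalRep G (fun v => Set.Icc (l v) (r v)))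
    (hmin : ∀ (l' r' : V → ℝ), (∀ v, l' v ≤ r' v) →
      IsIntervalRep G (fun v => Set.Icc (l' v) (r' v)) →
      (bpwBset l r).ncard ≤ (bpwBset l' r').ncard)
    (u v : V) (huv : u ≠ v) (hlvu : l v ≤ l u) (hruv : r u ≤ r v) :
    r u < r v := by
  classical
  rcases lt_or_eq_of_le hruv with h | heq
  · exact h
  exfalso
  obtain ⟨s, hs1, hs2⟩ := bpw_exists_above (r u) l r
  set r' : V → ℝ := fun w => if w = u then s else r w with hr'
  have hr'u : r' u = s := by simp [hr']
  have hr'w : ∀ w, w ≠ u → r' w = r w := fun w hw => by simp [hr', hw]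
  have h'le : ∀ w, l w ≤ r' w := by
    intro w
    by_cases hw : w = u
    · rw [hw, hr'u]; linarith [hle u]
    · rw [hr'w w hw]; exact hle w
  have hold := (bpw_rep_iff G hle).mp hrep
  have h'rep : IsIntervalRep G (fun w => Set.Icc (l w) (r' w)) := by
    rw [bpw_rep_iff G h'le]
    intro a b hab
    rw [hold a b hab]
    by_cases ha : a = u
    · have hb : b ≠ u := fun hh => hab (ha.trans hh.symm)
      rw [ha, hr'u, hr'w b hb]
      constructor
      · rintro ⟨x1, x2⟩; exact ⟨x1, by linarith⟩
      · rintro ⟨x1, x2⟩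
        refine ⟨x1, ?_⟩
        by_contra hc
        push_neg at hc
        linarith [(hs2 b).1 hc]
    · by_cases hb : b = u
      · rw [hb, hr'u, hr'w a ha]
        constructor
        · rintro ⟨x1, x2⟩; exact ⟨by linarith, x2⟩
        · rintro ⟨x1, x2⟩
          refine ⟨?_, x2⟩
          by_contra hc
          push_neg at hc
          linarith [(hs2 a).1 hc]
      · rw [hr'w a ha, hr'w b hb]
  have huvB : (u, v) ∈ bpwBset l r := (bpw_mem_bset hle u v).mpr ⟨huv, hlvu, hruv⟩
  have hmap : ∀ p ∈ bpwBset l r', id p ∈ bpwBset l r ∧ id p ≠ (u, v) := by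
    rintro ⟨a, b⟩ hp
    rw [bpw_mem_bset h'le] at hp
    obtain ⟨hab, hl2, hr2⟩ := hp
    simp only [id_eq]
    by_cases ha : a = u
    · have hb : b ≠ u := fun hh => hab (ha.trans hh.symm)
      rw [ha, hr'u, hr'w b hb] at hr2
      refine ⟨(bpw_mem_bset hle a b).mpr ⟨hab, hl2, by rw [ha]; linarith⟩, ?_⟩
      intro hcon
      have hbv : b = v := congrArg Prod.snd hcon
      rw [hbv] at hr2
      linarith [heq.symm ▸ hr2]
    · rw [hr'w a ha] at hr2
      by_cases hb : b = u
      · rw [hb, hr'u] at hr2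
        have hra : r a ≤ r u := by
          by_contra hc
          push_neg at hc
          linarith [(hs2 a).2 hc]
        exact ⟨(bpw_mem_bset hle a b).mpr ⟨hab, hl2, hb ▸ hra⟩,
          fun hcon => ha (congrArg Prod.fst hcon)⟩
      · rw [hr'w b hb] at hr2
        exact ⟨(bpw_mem_bset hle a b).mpr ⟨hab, hl2, hr2⟩,
          fun hcon => ha (congrArg Prod.fst hcon)⟩
  have hcount := bpw_count_lt l r l r' u v huvB id hmap (Set.injOn_id _)
  exact absurd (hmin l r' h'le h'rep) (not_le.mpr hcount)

open Classical in
noncomputable def bpwPhi {V : Type*} (B : Set (V × V)) (u v : V) : V × V → V × V :=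
  fun p => if p ∈ B then p else if p.2 = u then (p.1, v) else (u, p.2)

lemma bpwPhi_mem {V : Type*} {B : Set (V × V)} {u v : V} {p : V × V} (hp : p ∈ B) :
    bpwPhi B u v p = p := by
  unfold bpwPhi; rw [if_pos hp]

lemma bpwPhi_snd {V : Type*} {B : Set (V × V)} {u v a b : V} (hp : (a, b) ∉ B) (hb : b = u) :
    bpwPhi B u v (a, b) = (a, v) := by
  unfold bpwPhi; rw [if_neg hp, if_pos hb]

lemma bpwPhi_fst {V : Type*} {B : Set (V × V)} {u v a b : V} (hp : (a, b) ∉ B) (hb : b ≠ u) :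
    bpwPhi B u v (a, b) = (u, b) := by
  unfold bpwPhi; rw [if_neg hp, if_neg hb]

lemma bpw_exists_y {V : Type*} [Fintype V] (G : SimpleGraph V)
    (l r : V → ℝ) (hle : ∀ v, l v ≤ r v)
    (hrep : IsIntervalRep G (fun v => Set.Icc (l v) (r v)))
    (hmin : ∀ (l' r' : V → ℝ), (∀ v, l' v ≤ r' v) →
      IsIntervalRep G (fun v => Set.Icc (l' v) (r' v)) →
      (bpwBset l r).ncard ≤ (bpwBset l' r').ncard)
    (u v : V) (huv : u ≠ v) (hlvu : l v < l u) (hruv : r u < r v) :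
    ∃ y : V, r u < l y ∧ l y ≤ r v := by
  classical
  by_contra hy
  push_neg at hy
  set r' : V → ℝ := fun w => if w = u then r v else if w = v then r u else r w with hr'
  have hr'u : r' u = r v := by simp [hr']
  have hr'v : r' v = r u := by simp [hr', Ne.symm huv]
  have hr'w : ∀ w, w ≠ u → w ≠ v → r' w = r w := fun w h1 h2 => by simp [hr', h1, h2]
  have h'le : ∀ w, l w ≤ r' w := by
    intro w
    by_cases h1 : w = u
    · rw [h1, hr'u]; linarith [hle u]
    by_cases h2 : w = v
    · rw [h2, hr'v]; linarith [hle u]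
    · rw [hr'w w h1 h2]; exact hle w
  have hold := (bpw_rep_iff G hle).mp hrep
  have h'rep : IsIntervalRep G (fun w => Set.Icc (l w) (r' w)) := by
    rw [bpw_rep_iff G h'le]
    intro a b hab
    rw [hold a b hab]
    by_cases ha1 : a = u
    · have hb0 : b ≠ u := fun hh => hab (ha1.trans hh.symm)
      by_cases hb1 : b = v
      · rw [ha1, hb1, hr'u, hr'v]
        exact iff_of_true ⟨by linarith [hle u], by linarith [hle u]⟩
          ⟨by linarith [hle u], hle v⟩
      · rw [ha1, hr'u, hr'w b hb0 hb1]
        constructor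
        · rintro ⟨x1, x2⟩; exact ⟨x1, by linarith⟩
        · rintro ⟨x1, x2⟩
          refine ⟨x1, ?_⟩
          by_contra hc
          push_neg at hc
          linarith [hy b hc]
    · by_cases ha2 : a = v
      · have hb0 : b ≠ v := fun hh => hab (ha2.trans hh.symm)
        by_cases hb1 : b = u
        · rw [ha2, hb1, hr'v, hr'u]
          exact iff_of_true ⟨by linarith [hle u], by linarith [hle u]⟩
            ⟨hle v, by linarith [hle u]⟩
        · rw [ha2, hr'v, hr'w b hb1 hb0]
          constructor
          · rintro ⟨x1, x2⟩
            refine ⟨x1, ?_⟩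
            by_contra hc
            push_neg at hc
            linarith [hy b hc]
          · rintro ⟨x1, x2⟩; exact ⟨x1, by linarith⟩
      · by_cases hb1 : b = u
        · rw [hb1, hr'u, hr'w a ha1 ha2]
          constructor
          · rintro ⟨x1, x2⟩; exact ⟨by linarith, x2⟩
          · rintro ⟨x1, x2⟩
            refine ⟨?_, x2⟩
            by_contra hc
            push_neg at hc
            linarith [hy a hc]
        · by_cases hb2 : b = v
          · rw [hb2, hr'v, hr'w a ha1 ha2]
            constructor
            · rintro ⟨x1, x2⟩
              refine ⟨?_, x2⟩
              by_contra hc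
              push_neg at hc
              linarith [hy a hc]
            · rintro ⟨x1, x2⟩; exact ⟨by linarith, x2⟩
          · rw [hr'w a ha1 ha2, hr'w b hb1 hb2]
  have huvB : (u, v) ∈ bpwBset l r :=
    (bpw_mem_bset hle u v).mpr ⟨huv, le_of_lt hlvu, le_of_lt hruv⟩
  -- gains characterization
  have hgain : ∀ a b : V, (a, b) ∈ bpwBset l r' → (a, b) ∉ bpwBset l r →
      (b = u ∧ a ≠ u ∧ a ≠ v ∧ l u ≤ l a ∧ r u < r a ∧ r a ≤ r v) ∨
      (a = v ∧ b ≠ u ∧ b ≠ v ∧ l b ≤ l v ∧ r u ≤ r b ∧ r b < r v) := by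
    intro a b hp hnp
    rw [bpw_mem_bset h'le] at hp
    obtain ⟨hab, hl2, hr2⟩ := hp
    rw [bpw_mem_bset hle] at hnp
    push_neg at hnp
    have hnp2 : r b < r a := hnp hab hl2
    by_cases hb1 : b = u
    · by_cases ha2 : a = v
      · exfalso
        rw [ha2, hb1] at hl2
        linarith
      · have ha1 : a ≠ u := fun hh => hab (hh.trans hb1.symm)
        rw [hb1, hr'u] at hr2
        rw [hr'w a ha1 ha2] at hr2
        refine Or.inl ⟨hb1, ha1, ha2, ?_, ?_, hr2⟩
        · rw [← hb1]; exact hl2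
        · rw [← hb1]; exact hnp2
    · by_cases ha1 : a = u
      · by_cases hb2 : b = v
        · exfalso
          rw [ha1, hb2, hr'u, hr'v] at hr2
          linarith
        · exfalso
          rw [ha1, hr'u, hr'w b hb1 hb2] at hr2
          rw [ha1] at hnp2
          linarith
      · by_cases ha2 : a = v
        · by_cases hb2 : b = v
          · exact absurd (ha2.trans hb2.symm) hab
          · rw [ha2, hr'v, hr'w b hb1 hb2] at hr2
            rw [ha2] at hnp2 hl2
            exact Or.inr ⟨ha2, hb1, hb2, hl2, hr2, hnp2⟩
        · by_cases hb2 : b = v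
          · exfalso
            rw [hb2, hr'v, hr'w a ha1 ha2] at hr2
            rw [hb2] at hnp2
            linarith
          · exfalso
            rw [hr'w a ha1 ha2, hr'w b hb1 hb2] at hr2
            linarith
  have huvB' : (u, v) ∉ bpwBset l r' := by
    intro h
    rw [bpw_mem_bset h'le, hr'u, hr'v] at h
    linarith [h.2.2]
  set φ := bpwPhi (bpwBset l r) u v with hφ
  have hmap : ∀ p ∈ bpwBset l r', φ p ∈ bpwBset l r ∧ φ p ≠ (u, v) := by
    rintro ⟨a, b⟩ hp
    by_cases hB : (a, b) ∈ bpwBset l r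
    · rw [hφ, bpwPhi_mem hB]
      refine ⟨hB, fun hcon => ?_⟩
      rw [hcon] at hp
      exact huvB' hp
    · rcases hgain a b hp hB with ⟨hb1, ha1, ha2, h4, h5, h6⟩ | ⟨ha1, hb1, hb2, h4, h5, h6⟩
      · rw [hφ, bpwPhi_snd hB hb1]
        refine ⟨(bpw_mem_bset hle a v).mpr ⟨ha2, by linarith, h6⟩, ?_⟩
        exact fun hcon => ha1 (congrArg Prod.fst hcon)
      · rw [hφ, bpwPhi_fst hB hb1]
        refine ⟨(bpw_mem_bset hle u b).mpr ⟨Ne.symm hb1, by linarith, h5⟩, ?_⟩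
        exact fun hcon => hb2 (congrArg Prod.snd hcon)
  have hinj : Set.InjOn φ (bpwBset l r') := by
    rintro ⟨a, b⟩ hx ⟨c, d⟩ hyy hxy
    by_cases hxB : (a, b) ∈ bpwBset l r <;> by_cases hyB : (c, d) ∈ bpwBset l r
    · rw [hφ, bpwPhi_mem hxB, bpwPhi_mem hyB] at hxy
      exact hxy
    · rw [hφ, bpwPhi_mem hxB] at hxy
      exfalso
      rcases hgain c d hyy hyB with ⟨hd1, hc1, hc2, h4, h5, h6⟩ | ⟨hc1, hd1, hd2, h4, h5, h6⟩
      · rw [bpwPhi_snd hyB hd1] at hxy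
        rw [hxy] at hx
        rw [bpw_mem_bset h'le] at hx
        have h3 := hx.2.2
        rw [hr'v, hr'w c hc1 hc2] at h3
        linarith
      · rw [bpwPhi_fst hyB hd1] at hxy
        rw [hxy] at hx
        rw [bpw_mem_bset h'le] at hx
        have h3 := hx.2.2
        rw [hr'u, hr'w d hd1 hd2] at h3
        linarith
    · rw [hφ, bpwPhi_mem hyB] at hxy
      exfalso
      rcases hgain a b hx hxB with ⟨hb1, ha1, ha2, h4, h5, h6⟩ | ⟨ha1, hb1, hb2, h4, h5, h6⟩
      · rw [bpwPhi_snd hxB hb1] at hxy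
        rw [← hxy] at hyy
        rw [bpw_mem_bset h'le] at hyy
        have h3 := hyy.2.2
        rw [hr'v, hr'w a ha1 ha2] at h3
        linarith
      · rw [bpwPhi_fst hxB hb1] at hxy
        rw [← hxy] at hyy
        rw [bpw_mem_bset h'le] at hyy
        have h3 := hyy.2.2
        rw [hr'u, hr'w b hb1 hb2] at h3
        linarith
    · rcases hgain a b hx hxB with ⟨hb1, ha1, ha2, _, _, _⟩ | ⟨ha1, hb1, hb2, _, _, _⟩ <;>
        rcases hgain c d hyy hyB with ⟨hd1, hc1, hc2, _, _, _⟩ | ⟨hc1, hd1, hd2, _, _, _⟩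
      · rw [hφ, bpwPhi_snd hxB hb1, bpwPhi_snd hyB hd1] at hxy
        have h1 : a = c := congrArg Prod.fst hxy
        exact Prod.ext_iff.mpr ⟨h1, hb1.trans hd1.symm⟩
      · rw [hφ, bpwPhi_snd hxB hb1, bpwPhi_fst hyB hd1] at hxy
        exact absurd (congrArg Prod.fst hxy) ha1
      · rw [hφ, bpwPhi_fst hxB hb1, bpwPhi_snd hyB hd1] at hxy
        exact absurd (congrArg Prod.fst hxy).symm hc1
      · rw [hφ, bpwPhi_fst hxB hb1, bpwPhi_fst hyB hd1] at hxy
        have h2 : b = d := congrArg Prod.snd hxy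
        exact Prod.ext_iff.mpr ⟨ha1.trans hc1.symm, h2⟩
  have hcount := bpw_count_lt l r l r' u v huvB φ hmap hinj
  exact absurd (hmin l r' h'le h'rep) (not_le.mpr hcount)


lemma bpw_rep_neg {V : Type*} (G : SimpleGraph V) {l r : V → ℝ} (hle : ∀ v, l v ≤ r v)
    (hrep : IsIntervalRep G (fun v => Set.Icc (l v) (r v))) :
    IsIntervalRep G (fun v => Set.Icc (-r v) (-l v)) := by
  have hle' : ∀ w, -r w ≤ -l w := fun w => neg_le_neg (hle w)
  rw [bpw_rep_iff G hle']
  have h := (bpw_rep_iff G hle).mp hrep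
  intro a b hab
  rw [h a b hab]
  constructor
  · rintro ⟨h1, h2⟩
    exact ⟨neg_le_neg h2, neg_le_neg h1⟩
  · rintro ⟨h1, h2⟩
    exact ⟨neg_le_neg_iff.mp h2, neg_le_neg_iff.mp h1⟩

lemma bpw_bset_neg {V : Type*} {l r : V → ℝ} (hle : ∀ v, l v ≤ r v) :
    bpwBset (fun w => -r w) (fun w => -l w) = bpwBset l r := by
  ext p
  obtain ⟨a, b⟩ := p
  rw [bpw_mem_bset (fun w => neg_le_neg (hle w)), bpw_mem_bset hle]
  constructor
  · rintro ⟨h1, h2, h3⟩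
    exact ⟨h1, neg_le_neg_iff.mp h3, neg_le_neg_iff.mp h2⟩
  · rintro ⟨h1, h2, h3⟩
    exact ⟨h1, neg_le_neg h3, neg_le_neg h2⟩

/-- Claim 1 -/
theorem bad_pair_witnesses {V : Type*} [Fintype V] (G : SimpleGraph V)
    (l r : V → ℝ) (hle : ∀ v, l v ≤ r v)
    (hrep : IsIntervalRep G (fun v => Set.Icc (l v) (r v)))
    (hmin : ∀ (l' r' : V → ℝ), (∀ v, l' v ≤ r' v) →
      IsIntervalRep G (fun v => Set.Icc (l' v) (r' v)) →
      {p : V × V | p.1 ≠ p.2 ∧ Set.Icc (l p.1) (r p.1) ⊆ Set.Icc (l p.2) (r p.2)}.ncard ≤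
      {p : V × V | p.1 ≠ p.2 ∧ Set.Icc (l' p.1) (r' p.1) ⊆ Set.Icc (l' p.2) (r' p.2)}.ncard)
    (u v : V) (huv : u ≠ v)
    (hbad : Set.Icc (l u) (r u) ⊆ Set.Icc (l v) (r v)) :
    ∃ x y : V, l v ≤ r x ∧ r x < l u ∧ r u < l y ∧ l y ≤ r v := by
  classical
  have hmin' : ∀ (l' r' : V → ℝ), (∀ v, l' v ≤ r' v) →
      IsIntervalRep G (fun v => Set.Icc (l' v) (r' v)) →
      (bpwBset l r).ncard ≤ (bpwBset l' r').ncard := hmin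
  obtain ⟨hlvu, hruv⟩ := (Set.Icc_subset_Icc_iff (hle u)).mp hbad
  have hle₁ : ∀ w, (fun w => -r w) w ≤ (fun w => -l w) w := fun w => neg_le_neg (hle w)
  have hrep₁ := bpw_rep_neg G hle hrep
  have hmin₁ : ∀ (l' r' : V → ℝ), (∀ v, l' v ≤ r' v) →
      IsIntervalRep G (fun v => Set.Icc (l' v) (r' v)) →
      (bpwBset (fun w => -r w) (fun w => -l w)).ncard ≤ (bpwBset l' r').ncard := by
    intro l' r' h1 h2
    rw [bpw_bset_neg hle]
    have h3 : ∀ w, (fun w => -r' w) w ≤ (fun w => -l' w) w := fun w => neg_le_neg (h1 w)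
    have h4 := bpw_rep_neg G h1 h2
    have h5 := hmin' _ _ h3 h4
    rwa [bpw_bset_neg h1] at h5
  have hru_lt : r u < r v := bpw_neq_r G l r hle hrep hmin' u v huv hlvu hruv
  have hlv_lt : l v < l u := by
    have h := bpw_neq_r G (fun w => -r w) (fun w => -l w) hle₁ hrep₁ hmin₁ u v huv
      (neg_le_neg hruv) (neg_le_neg hlvu)
    have h' : -l u < -l v := h
    linarith
  obtain ⟨y, hy1, hy2⟩ := bpw_exists_y G l r hle hrep hmin' u v huv hlv_lt hru_lt
  obtain ⟨x, hx1, hx2⟩ := bpw_exists_y G (fun w => -r w) (fun w => -l w) hle₁ hrep₁ hmin₁ u v huv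
    (neg_lt_neg hru_lt) (neg_lt_neg hlv_lt)
  have hx1' : -l u < -r x := hx1
  have hx2' : -r x ≤ -l v := hx2
  exact ⟨x, y, by linarith, by linarith, hy1, hy2⟩
end

section
/- Let G be an interval graph with an interval representation by closed intervals having no induced K_{2,3}^*, minimizing the number of bad pairs, with all endpoints distinct. Then no interval is contained in two distinct intervals; i.e., if (u,v) and (u,w) are bad pairs then v = w. -/
open Set

/-- K_{2,3}^*: K_{2,3} with parts {0,1} and {2,3,4}, with the extra edge 01. -/
def K23star : SimpleGraph (Fin 5) := SimpleGraph.fromRel (fun u v =>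
  (u = 0 ∧ v = 1) ∨ ((u = 0 ∨ u = 1) ∧ (v = 2 ∨ v = 3 ∨ v = 4)))

theorem key_s8 {V : Type*} [Fintype V] (G : SimpleGraph V)
    (hK : ¬ HasInducedSubgraph G K23star)
    (l r : V → ℝ) (hle : ∀ v, l v ≤ r v)
    (hrep : IsIntervalRep G (fun v => Set.Icc (l v) (r v)))
    (hmin : ∀ (l' r' : V → ℝ), (∀ v, l' v ≤ r' v) →
      IsIntervalRep G (fun v => Set.Icc (l' v) (r' v)) →
      {p : V × V | p.1 ≠ p.2 ∧ Set.Icc (l p.1) (r p.1) ⊆ Set.Icc (l p.2) (r p.2)}.ncard ≤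
      {p : V × V | p.1 ≠ p.2 ∧ Set.Icc (l' p.1) (r' p.1) ⊆ Set.Icc (l' p.2) (r' p.2)}.ncard)
    (hinjl : Function.Injective l) (hinjr : Function.Injective r)
    (hlr : ∀ a b : V, l a ≠ r b)
    (u v w : V) (huv : u ≠ v) (huw : u ≠ w) (hvw : v ≠ w) (hlvw : l v < l w)
    (hbadv : Set.Icc (l u) (r u) ⊆ Set.Icc (l v) (r v))
    (hbadw : Set.Icc (l u) (r u) ⊆ Set.Icc (l w) (r w)) : False := by
  classical
  -- basic adjacency helpers
  have hadj : ∀ x y : V, x ≠ y → l y ≤ r x → l x ≤ r y → G.Adj x y := by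
    intro x y hne h1 h2
    exact (hrep x y hne).2 ⟨max (l x) (l y),
      ⟨⟨le_max_left _ _, max_le (hle x) h1⟩, ⟨le_max_right _ _, max_le h2 (hle y)⟩⟩⟩
  have hnadj : ∀ x y : V, r x < l y → ¬ G.Adj x y := by
    intro x y h hA
    obtain ⟨t, ht1, ht2⟩ := (hrep x y hA.ne).1 hA
    have := ht1.2; have := ht2.1; linarith
  have hIcc : ∀ a b : V, (Icc (l a) (r a) ⊆ Icc (l b) (r b)) ↔ (l b ≤ l a ∧ r a ≤ r b) :=
    fun a b => Set.Icc_subset_Icc_iff (hle a)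
  obtain ⟨hv1, hv2⟩ := (hIcc u v).1 hbadv
  obtain ⟨hw1, hw2⟩ := (hIcc u w).1 hbadw
  have hv1' : l v < l u := lt_of_le_of_ne hv1 (fun h => huv (hinjl h).symm)
  have hw1' : l w < l u := lt_of_le_of_ne hw1 (fun h => huw (hinjl h).symm)
  have hv2' : r u < r v := lt_of_le_of_ne hv2 (fun h => huv (hinjr h))
  have hw2' : r u < r w := lt_of_le_of_ne hw2 (fun h => huw (hinjr h))
  set m := min (r v) (r w) with hm
  have hmv : m ≤ r v := min_le_left _ _
  have hmw : m ≤ r w := min_le_right _ _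
  obtain ⟨z, hzr, hzl⟩ : ∃ z : V, r z = m ∧ l z ≤ l w := by
    rcases le_total (r v) (r w) with h | h
    · exact ⟨v, (min_eq_left h).symm, hlvw.le⟩
    · exact ⟨w, (min_eq_right h).symm, le_rfl⟩
  -- the set of intervals strictly inside [l w, m]
  set S : Finset V := Finset.univ.filter (fun x : V => l w < l x ∧ r x < m) with hS
  have hmemS : ∀ x : V, x ∈ S ↔ (l w < l x ∧ r x < m) := by
    intro x; simp [hS]
  have huS : u ∈ S := (hmemS u).2 ⟨hw1', lt_min hv2' hw2'⟩
  obtain ⟨u₁, hu₁S, hu₁⟩ := S.exists_min_image l ⟨u, huS⟩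
  obtain ⟨u₂, hu₂S, hu₂⟩ := S.exists_max_image r ⟨u, huS⟩
  obtain ⟨hu₁a, hu₁b⟩ := (hmemS u₁).1 hu₁S
  obtain ⟨hu₂a, hu₂b⟩ := (hmemS u₂).1 hu₂S
  have h12 : r u₁ ≤ r u₂ := hu₂ u₁ hu₁S
  -- separation constant
  set E : Finset ℝ := Finset.image l Finset.univ ∪ Finset.image r Finset.univ with hE
  have hlE : ∀ x : V, l x ∈ E := by intro x; simp [hE]
  have hrE : ∀ x : V, r x ∈ E := by intro x; simp [hE]
  obtain ⟨ε, hεpos, hsep⟩ : ∃ ε : ℝ, 0 < ε ∧ ∀ a b : ℝ, a ∈ E → b ∈ E → a ≠ b → 2 * ε ≤ |a - b| := by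
    have hpair : (l v, l w) ∈ (E ×ˢ E).filter (fun p : ℝ × ℝ => p.1 < p.2) :=
      Finset.mem_filter.2 ⟨Finset.mem_product.2 ⟨hlE v, hlE w⟩, hlvw⟩
    set Df := ((E ×ˢ E).filter (fun p : ℝ × ℝ => p.1 < p.2)).image
      (fun p : ℝ × ℝ => p.2 - p.1) with hDf
    have hDne : Df.Nonempty := ⟨l w - l v, Finset.mem_image.2 ⟨(l v, l w), hpair, rfl⟩⟩
    have hposall : ∀ x ∈ Df, 0 < x := by
      intro x hx
      rw [hDf] at hx
      obtain ⟨p, hp, rfl⟩ := Finset.mem_image.1 hx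
      have := (Finset.mem_filter.1 hp).2
      linarith
    have hminmem := Df.min'_mem hDne
    refine ⟨Df.min' hDne / 2, by linarith [hposall _ hminmem], ?_⟩
    intro a b ha hb hne
    rcases lt_or_gt_of_ne hne with h | h
    · have hmem : b - a ∈ Df := Finset.mem_image.2 ⟨(a, b),
        Finset.mem_filter.2 ⟨Finset.mem_product.2 ⟨ha, hb⟩, h⟩, rfl⟩
      have := Df.min'_le _ hmem
      rw [abs_sub_comm, abs_of_pos (by linarith)]
      linarith
    · have hmem : a - b ∈ Df := Finset.mem_image.2 ⟨(b, a),
        Finset.mem_filter.2 ⟨Finset.mem_product.2 ⟨hb, ha⟩, h⟩, rfl⟩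
      have := Df.min'_le _ hmem
      rw [abs_of_pos (by linarith)]
      linarith
  by_cases hL : ∃ y : V, r y ∈ Set.Ioo (l w) (l u₁)
  · by_cases hR : ∃ y : V, l y ∈ Set.Ioo (r u₂) m
    · -- both obstructions: build K23star
      obtain ⟨yL, hyL1, hyL2⟩ := hL
      obtain ⟨yR, hyR1, hyR2⟩ := hR
      have oyL : l yL ≤ r yL := hle yL
      have oyR : l yR ≤ r yR := hle yR
      have o1 : l u₁ ≤ r u₁ := hle u₁
      have o2 : l u₂ ≤ r u₂ := hle u₂
      have hu₂m : r u₂ < m := hu₂b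
      have nerl : ∀ {a b : V}, r a < r b → a ≠ b := fun h hab => absurd (hab ▸ h) (lt_irrefl _)
      have nell : ∀ {a b : V}, l a < l b → a ≠ b := fun h hab => absurd (hab ▸ h) (lt_irrefl _)
      -- distinctness
      have n_vw : v ≠ w := hvw
      have n_vu₁ : v ≠ u₁ := nell (by linarith)
      have n_vyL : v ≠ yL := (nerl (by linarith)).symm
      have n_vyR : v ≠ yR := nell (by linarith)
      have n_wu₁ : w ≠ u₁ := nell (by linarith)
      have n_wyL : w ≠ yL := (nerl (by linarith)).symm
      have n_wyR : w ≠ yR := nell (by linarith)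
      have n_u₁yL : u₁ ≠ yL := (nerl (by linarith)).symm
      have n_u₁yR : u₁ ≠ yR := nell (by linarith)
      have n_yLyR : yL ≠ yR := nerl (by linarith)
      -- adjacencies
      have Avw : G.Adj v w := hadj v w n_vw (by linarith) (by linarith)
      have Avu₁ : G.Adj v u₁ := hadj v u₁ n_vu₁ (by linarith) (by linarith)
      have Awu₁ : G.Adj w u₁ := hadj w u₁ n_wu₁ (by linarith) (by linarith)
      have AvyL : G.Adj v yL := hadj v yL n_vyL (by linarith) (by linarith)
      have AwyL : G.Adj w yL := hadj w yL n_wyL (by linarith) (by linarith)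
      have AvyR : G.Adj v yR := hadj v yR n_vyR (by linarith) (by linarith)
      have AwyR : G.Adj w yR := hadj w yR n_wyR (by linarith) (by linarith)
      -- non-adjacencies
      have NyLu₁ : ¬ G.Adj yL u₁ := hnadj yL u₁ (by linarith)
      have Nu₁yR : ¬ G.Adj u₁ yR := hnadj u₁ yR (by linarith)
      have NyLyR : ¬ G.Adj yL yR := hnadj yL yR (by linarith)
      apply hK
      refine ⟨⟨![v, w, u₁, yL, yR], ?_⟩, ?_⟩
      · intro a b hab
        fin_cases a <;> fin_cases b <;>
          first
            | rfl
            | exact absurd hab (by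
                first
                  | exact n_vw | exact n_vw.symm | exact n_vu₁ | exact n_vu₁.symm
                  | exact n_vyL | exact n_vyL.symm | exact n_vyR | exact n_vyR.symm
                  | exact n_wu₁ | exact n_wu₁.symm | exact n_wyL | exact n_wyL.symm
                  | exact n_wyR | exact n_wyR.symm | exact n_u₁yL | exact n_u₁yL.symm
                  | exact n_u₁yR | exact n_u₁yR.symm | exact n_yLyR | exact n_yLyR.symm)
      · intro a b
        fin_cases a <;> fin_cases b <;>
          first
            | exact iff_of_false (by simp [K23star, SimpleGraph.fromRel_adj]) (G.irrefl)
            | exact iff_of_true (by simp [K23star, SimpleGraph.fromRel_adj]) (by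
                first
                  | exact Avw | exact Avw.symm | exact Avu₁ | exact Avu₁.symm
                  | exact Awu₁ | exact Awu₁.symm | exact AvyL | exact AvyL.symm
                  | exact AwyL | exact AwyL.symm | exact AvyR | exact AvyR.symm
                  | exact AwyR | exact AwyR.symm)
            | exact iff_of_false (by simp [K23star, SimpleGraph.fromRel_adj]) (by
                first
                  | exact NyLu₁ | exact fun h => NyLu₁ h.symm
                  | exact Nu₁yR | exact fun h => Nu₁yR h.symm
                  | exact NyLyR | exact fun h => NyLyR h.symm)
    · -- no right obstruction: push r u₂ past m
      set r' : V → ℝ := fun x => if x = u₂ then m + ε else r x with hr'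
      have hr'u : r' u₂ = m + ε := by simp [hr']
      have hr'x : ∀ x, x ≠ u₂ → r' x = r x := by intro x hx; simp [hr', hx]
      have hr'ge : ∀ x, r x ≤ r' x := by
        intro x
        by_cases hx : x = u₂
        · subst hx; rw [hr'u]; linarith [hu₂b]
        · rw [hr'x x hx]
      have hle' : ∀ x, l x ≤ r' x := fun x => le_trans (hle x) (hr'ge x)
      have haux : ∀ x, x ≠ u₂ → ((Icc (l u₂) (r' u₂)) ∩ Icc (l x) (r x)).Nonempty →
          G.Adj u₂ x := by
        rintro x hx ⟨t, ⟨ht1, ht2⟩, ht3, ht4⟩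
        rw [hr'u] at ht2
        by_cases hc : r u₂ < l x
        · exfalso
          have hxm : l x ≠ m := hzr ▸ hlr x z
          have h2 : 2 * ε ≤ |l x - m| := hsep _ _ (hlE x) (hzr ▸ hrE z) hxm
          have hxm' : l x < m := by
            rcases lt_or_gt_of_ne hxm with h | h
            · exact h
            · exfalso; rcases abs_cases (l x - m) with ⟨he, _⟩ | ⟨_, hneg⟩ <;> linarith
          exact hR ⟨x, hc, hxm'⟩
        · push_neg at hc
          exact hadj u₂ x hx.symm hc (by linarith)
      have hrep' : IsIntervalRep G (fun x => Icc (l x) (r' x)) := by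
        intro x y hxy
        constructor
        · intro hA
          obtain ⟨t, ht1, ht2⟩ := (hrep x y hxy).1 hA
          exact ⟨t, ⟨ht1.1, le_trans ht1.2 (hr'ge x)⟩, ⟨ht2.1, le_trans ht2.2 (hr'ge y)⟩⟩
        · intro hne
          obtain ⟨t, ht1, ht2⟩ := hne
          have hx1 : l x ≤ t := ht1.1
          have hx2 : t ≤ r' x := ht1.2
          have hy1 : l y ≤ t := ht2.1
          have hy2 : t ≤ r' y := ht2.2
          by_cases hx : x = u₂
          · have hy : y ≠ u₂ := fun h => hxy (hx.trans h.symm)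
            rw [hx] at hx1 hx2 ⊢
            rw [hr'x y hy] at hy2
            exact haux y hy ⟨t, ⟨hx1, hx2⟩, ⟨hy1, hy2⟩⟩
          · by_cases hy : y = u₂
            · rw [hy] at hy1 hy2 ⊢
              have hx' : x ≠ u₂ := hy ▸ hxy
              rw [hr'x x hx] at hx2
              exact (haux x hx' ⟨t, ⟨hy1, hy2⟩, ⟨hx1, hx2⟩⟩).symm
            · rw [hr'x x hx] at hx2
              rw [hr'x y hy] at hy2
              exact (hrep x y hxy).2 ⟨t, ⟨hx1, hx2⟩, ⟨hy1, hy2⟩⟩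
      have hBsub : {p : V × V | p.1 ≠ p.2 ∧ Icc (l p.1) (r' p.1) ⊆ Icc (l p.2) (r' p.2)} ⊆
          {p : V × V | p.1 ≠ p.2 ∧ Icc (l p.1) (r p.1) ⊆ Icc (l p.2) (r p.2)} := by
        rintro ⟨p, q⟩ ⟨hpq, hsub⟩
        refine ⟨hpq, ?_⟩
        obtain ⟨h1, h2⟩ := (Set.Icc_subset_Icc_iff (hle' p)).1 hsub
        rw [hIcc]
        by_cases hp : p = u₂
        · have hq : q ≠ u₂ := fun h => hpq (hp.trans h.symm)
          rw [hp] at h1 h2 ⊢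
          rw [hr'u] at h2; rw [hr'x q hq] at h2
          exact ⟨h1, by linarith [hu₂b]⟩
        · rw [hr'x p hp] at h2
          by_cases hq : q = u₂
          · rw [hq] at h1 h2 ⊢
            rw [hr'u] at h2
            refine ⟨h1, ?_⟩
            by_contra hgt
            push_neg at hgt
            have hplw : l u₂ < l p := lt_of_le_of_ne h1 (fun h => hp (hinjl h.symm))
            have hpz : p ≠ z := by
              intro h
              rw [h] at hplw
              linarith
            have hpm : r p ≠ m := by
              rw [← hzr]
              exact fun h => hpz (hinjr h)
            have hpm' : r p < m := by
              rcases lt_or_gt_of_ne hpm with h | h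
              · exact h
              · exfalso
                have h2s : 2 * ε ≤ |r p - m| := hsep _ _ (hrE p) (hzr ▸ hrE z) hpm
                rcases abs_cases (r p - m) with ⟨he, _⟩ | ⟨_, hneg⟩ <;> linarith
            have hpS : p ∈ S := (hmemS p).2 ⟨by linarith, hpm'⟩
            exact absurd (hu₂ p hpS) (not_le.2 hgt)
          · rw [hr'x q hq] at h2
            exact ⟨h1, h2⟩
      have hmem : (u₂, z) ∈ {p : V × V | p.1 ≠ p.2 ∧
          Icc (l p.1) (r p.1) ⊆ Icc (l p.2) (r p.2)} := by
        have hne : u₂ ≠ z := by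
          intro h
          rw [h] at hu₂a
          linarith
        exact ⟨hne, (hIcc u₂ z).2 ⟨by linarith, by linarith⟩⟩
      have hnm : (u₂, z) ∉ {p : V × V | p.1 ≠ p.2 ∧
          Icc (l p.1) (r' p.1) ⊆ Icc (l p.2) (r' p.2)} := by
        rintro ⟨hne, hc⟩
        have hc' : Icc (l u₂) (r' u₂) ⊆ Icc (l z) (r' z) := hc
        obtain ⟨_, h2⟩ := (Set.Icc_subset_Icc_iff (hle' u₂)).1 hc'
        have hzu : z ≠ u₂ := Ne.symm hne
        rw [hr'u, hr'x z hzu, hzr] at h2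
        linarith
      have hlt := Set.ncard_lt_ncard ((Set.ssubset_iff_of_subset hBsub).2
        ⟨(u₂, z), hmem, hnm⟩) (Set.toFinite _)
      exact absurd (hmin l r' hle' hrep') (not_le.2 hlt)
  · -- no left obstruction: push l u₁ past l w
    set l' : V → ℝ := fun x => if x = u₁ then l w - ε else l x with hl'
    have hl'u : l' u₁ = l w - ε := by simp [hl']
    have hl'x : ∀ x, x ≠ u₁ → l' x = l x := by intro x hx; simp [hl', hx]
    have hl'le : ∀ x, l' x ≤ l x := by
      intro x
      by_cases hx : x = u₁
      · subst hx; rw [hl'u]; linarith [hu₁a]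
      · rw [hl'x x hx]
    have hle' : ∀ x, l' x ≤ r x := fun x => le_trans (hl'le x) (hle x)
    have haux : ∀ x, x ≠ u₁ → ((Icc (l' u₁) (r u₁)) ∩ Icc (l x) (r x)).Nonempty →
        G.Adj u₁ x := by
      rintro x hx ⟨t, ⟨ht1, ht2⟩, ht3, ht4⟩
      rw [hl'u] at ht1
      by_cases hc : r x < l u₁
      · exfalso
        have hxm : r x ≠ l w := (hlr w x).symm
        have h2 : 2 * ε ≤ |r x - l w| := hsep _ _ (hrE x) (hlE w) hxm
        have hxm' : l w < r x := by
          rcases lt_or_gt_of_ne hxm with h | h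
          · exfalso; rcases abs_cases (r x - l w) with ⟨he, _⟩ | ⟨_, hneg⟩ <;> linarith
          · exact h
        exact hL ⟨x, hxm', hc⟩
      · push_neg at hc
        exact hadj u₁ x hx.symm (by linarith) hc
    have hrep' : IsIntervalRep G (fun x => Icc (l' x) (r x)) := by
      intro x y hxy
      constructor
      · intro hA
        obtain ⟨t, ht1, ht2⟩ := (hrep x y hxy).1 hA
        exact ⟨t, ⟨le_trans (hl'le x) ht1.1, ht1.2⟩, ⟨le_trans (hl'le y) ht2.1, ht2.2⟩⟩
      · intro hne
        obtain ⟨t, ht1, ht2⟩ := hne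
        have hx1 : l' x ≤ t := ht1.1
        have hx2 : t ≤ r x := ht1.2
        have hy1 : l' y ≤ t := ht2.1
        have hy2 : t ≤ r y := ht2.2
        by_cases hx : x = u₁
        · have hy : y ≠ u₁ := fun h => hxy (hx.trans h.symm)
          rw [hx] at hx1 hx2 ⊢
          rw [hl'x y hy] at hy1
          exact haux y hy ⟨t, ⟨hx1, hx2⟩, ⟨hy1, hy2⟩⟩
        · by_cases hy : y = u₁
          · rw [hy] at hy1 hy2 ⊢
            have hx' : x ≠ u₁ := hy ▸ hxy
            rw [hl'x x hx] at hx1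
            exact (haux x hx' ⟨t, ⟨hy1, hy2⟩, ⟨hx1, hx2⟩⟩).symm
          · rw [hl'x x hx] at hx1
            rw [hl'x y hy] at hy1
            exact (hrep x y hxy).2 ⟨t, ⟨hx1, hx2⟩, ⟨hy1, hy2⟩⟩
    have hBsub : {p : V × V | p.1 ≠ p.2 ∧ Icc (l' p.1) (r p.1) ⊆ Icc (l' p.2) (r p.2)} ⊆
        {p : V × V | p.1 ≠ p.2 ∧ Icc (l p.1) (r p.1) ⊆ Icc (l p.2) (r p.2)} := by
      rintro ⟨p, q⟩ ⟨hpq, hsub⟩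
      refine ⟨hpq, ?_⟩
      obtain ⟨h1, h2⟩ := (Set.Icc_subset_Icc_iff (hle' p)).1 hsub
      rw [hIcc]
      by_cases hp : p = u₁
      · have hq : q ≠ u₁ := fun h => hpq (hp.trans h.symm)
        rw [hp] at h1 h2 ⊢
        rw [hl'u] at h1; rw [hl'x q hq] at h1
        exact ⟨by linarith [hu₁a, hεpos], h2⟩
      · rw [hl'x p hp] at h1
        by_cases hq : q = u₁
        · rw [hq] at h1 h2 ⊢
          rw [hl'u] at h1
          refine ⟨?_, h2⟩
          by_contra hgt
          push_neg at hgt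
          have hpr : r p < r u₁ := lt_of_le_of_ne h2 (fun h => hp (hinjr h))
          have hpw : p ≠ w := by
            intro h
            rw [h] at h2
            linarith
          have hplw : l w < l p := by
            have hne2 : l p ≠ l w := fun h => hpw (hinjl h)
            rcases lt_or_gt_of_ne hne2 with h | h
            · exfalso
              have h2s : 2 * ε ≤ |l p - l w| := hsep _ _ (hlE p) (hlE w) hne2
              rcases abs_cases (l p - l w) with ⟨he, _⟩ | ⟨_, hneg⟩ <;> linarith
            · exact h
          have hpS : p ∈ S := (hmemS p).2 ⟨hplw, by linarith⟩
          exact absurd (hu₁ p hpS) (not_le.2 hgt)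
        · rw [hl'x q hq] at h1
          exact ⟨h1, h2⟩
    have hmem : (u₁, w) ∈ {p : V × V | p.1 ≠ p.2 ∧
        Icc (l p.1) (r p.1) ⊆ Icc (l p.2) (r p.2)} := by
      have hne : u₁ ≠ w := by
        intro h
        rw [h] at hu₁a
        linarith
      exact ⟨hne, (hIcc u₁ w).2 ⟨by linarith, by linarith⟩⟩
    have hnm : (u₁, w) ∉ {p : V × V | p.1 ≠ p.2 ∧
        Icc (l' p.1) (r p.1) ⊆ Icc (l' p.2) (r p.2)} := by
      rintro ⟨hne, hc⟩
      have hc' : Icc (l' u₁) (r u₁) ⊆ Icc (l' w) (r w) := hc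
      obtain ⟨h1, _⟩ := (Set.Icc_subset_Icc_iff (hle' u₁)).1 hc'
      have hwu : w ≠ u₁ := Ne.symm hne
      rw [hl'u, hl'x w hwu] at h1
      linarith
    have hlt := Set.ncard_lt_ncard ((Set.ssubset_iff_of_subset hBsub).2
      ⟨(u₁, w), hmem, hnm⟩) (Set.toFinite _)
    exact absurd (hmin l' r hle' hrep') (not_le.2 hlt)

/-- Claim 3: in a bad-pair minimizing closed representation with pairwise distinct endpoints
of a K_{2,3}^*-free interval graph, no interval is contained in two distinct intervals. -/
theorem no_interval_in_two {V : Type*} [Fintype V] (G : SimpleGraph V)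
    (hK : ¬ HasInducedSubgraph G K23star)
    (l r : V → ℝ) (hle : ∀ v, l v ≤ r v)
    (hrep : IsIntervalRep G (fun v => Set.Icc (l v) (r v)))
    (hmin : ∀ (l' r' : V → ℝ), (∀ v, l' v ≤ r' v) →
      IsIntervalRep G (fun v => Set.Icc (l' v) (r' v)) →
      {p : V × V | p.1 ≠ p.2 ∧ Set.Icc (l p.1) (r p.1) ⊆ Set.Icc (l p.2) (r p.2)}.ncard ≤
      {p : V × V | p.1 ≠ p.2 ∧ Set.Icc (l' p.1) (r' p.1) ⊆ Set.Icc (l' p.2) (r' p.2)}.ncard)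
    (hinjl : Function.Injective l) (hinjr : Function.Injective r)
    (hlr : ∀ a b : V, l a ≠ r b)
    (u v w : V) (huv : u ≠ v) (huw : u ≠ w)
    (hbadv : Set.Icc (l u) (r u) ⊆ Set.Icc (l v) (r v))
    (hbadw : Set.Icc (l u) (r u) ⊆ Set.Icc (l w) (r w)) :
    v = w := by
  by_contra hvw
  have hne : l v ≠ l w := fun h => hvw (hinjl h)
  rcases lt_or_gt_of_ne hne with h | h
  · exact (key_s8 G hK l r hle hrep hmin hinjl hinjr hlr u v w huv huw hvw h hbadv hbadw).elim
  · exact (key_s8 G hK l r hle hrep hmin hinjl hinjr hlr u w v huw huv (Ne.symm hvw) h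
      hbadw hbadv).elim
end

section
/- For every k ≥ 1, every injective intersection representation of Q_k by unit intervals arises, up to translation and reflection of the real line, from the representation whose intervals are: either [0,1] or (0,1]; both [1,2] and (1,2); and both [i,i+1] and [i,i+1) for every 2 ≤ i ≤ k+1. -/
open Set

/-- The vertex type of Q_k : a path p_1 ... p_{k+1} (indices 0..k), triangle vertices
t_1 ... t_k (t_i has index i-1 and is adjacent to p_i and p_{i+1}), and two pendant
vertices attached at p_1. -/
abbrev QVert (k : ℕ) := Fin (k + 1) ⊕ (Fin k ⊕ Fin 2)

def Qadj (k : ℕ) : QVert k → QVert k → Prop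
  | Sum.inl m, Sum.inl m' => (m' : ℕ) = (m : ℕ) + 1
  | Sum.inr (Sum.inl i), Sum.inl m => (m : ℕ) = (i : ℕ) ∨ (m : ℕ) = (i : ℕ) + 1
  | Sum.inr (Sum.inr _), Sum.inl m => (m : ℕ) = 0
  | _, _ => False

/-- The graph Q_k. -/
def Qgraph (k : ℕ) : SimpleGraph (QVert k) := SimpleGraph.fromRel (Qadj k)

/-! ### Auxiliary machinery -/

def gI (a : ℝ) (l r : Bool) : Set ℝ :=
  {x | (if l then a ≤ x else a < x) ∧ (if r then x ≤ a + 1 else x < a + 1)}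

lemma gI_tt (a : ℝ) : gI a true true = Icc a (a+1) := by ext x; simp [gI, Icc]
lemma gI_ff (a : ℝ) : gI a false false = Ioo a (a+1) := by ext x; simp [gI, Ioo]
lemma gI_ft (a : ℝ) : gI a false true = Ioc a (a+1) := by ext x; simp [gI, Ioc]
lemma gI_tf (a : ℝ) : gI a true false = Ico a (a+1) := by ext x; simp [gI, Ico]

lemma unit_iff (s : Set ℝ) : IsUnitInterval s ↔ ∃ a l r, s = gI a l r := by
  constructor
  · rintro ⟨x, h | h | h | h⟩
    · exact ⟨x, true, true, by rw [h, gI_tt]⟩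
    · exact ⟨x, false, false, by rw [h, gI_ff]⟩
    · exact ⟨x, false, true, by rw [h, gI_ft]⟩
    · exact ⟨x, true, false, by rw [h, gI_tf]⟩
  · rintro ⟨a, l, r, rfl⟩
    refine ⟨a, ?_⟩
    cases l <;> cases r
    · rw [gI_ff]; tauto
    · rw [gI_ft]; tauto
    · rw [gI_tf]; tauto
    · rw [gI_tt]; tauto

lemma gI_lower {a : ℝ} {l r : Bool} {x : ℝ} (h : x ∈ gI a l r) : a ≤ x := by
  rcases h with ⟨h1, _⟩; cases l
  · exact le_of_lt h1
  · exact h1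

lemma gI_upper {a : ℝ} {l r : Bool} {x : ℝ} (h : x ∈ gI a l r) : x ≤ a + 1 := by
  rcases h with ⟨_, h2⟩; cases r
  · exact le_of_lt h2
  · exact h2

lemma left_mem_gI {a : ℝ} {l r : Bool} : a ∈ gI a l r ↔ l = true := by
  cases l <;> cases r <;> simp [gI]

lemma right_mem_gI {a : ℝ} {l r : Bool} : a + 1 ∈ gI a l r ↔ r = true := by
  cases l <;> cases r <;> simp [gI]

lemma gI_inter_iff (a b : ℝ) (l r l' r' : Bool) :
    (gI a l r ∩ gI b l' r').Nonempty ↔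
      ((a < b + 1 ∨ (a = b + 1 ∧ r' = true ∧ l = true)) ∧
       (b < a + 1 ∨ (b = a + 1 ∧ r = true ∧ l' = true))) := by
  constructor
  · rintro ⟨x, hx, hy⟩
    have h1 : a ≤ x := gI_lower hx
    have h2 : x ≤ a + 1 := gI_upper hx
    have h3 : b ≤ x := gI_lower hy
    have h4 : x ≤ b + 1 := gI_upper hy
    constructor
    · by_cases hab : a < b + 1
      · exact Or.inl hab
      · have hab' : a = b + 1 := le_antisymm (by linarith) (by linarith)
        have hxa : x = a := by linarith
        have hxb : x = b + 1 := by linarith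
        exact Or.inr ⟨hab', right_mem_gI.mp (hxb ▸ hy), left_mem_gI.mp (hxa ▸ hx)⟩
    · by_cases hba : b < a + 1
      · exact Or.inl hba
      · have hba' : b = a + 1 := le_antisymm (by linarith) (by linarith)
        have hxb : x = b := by linarith
        have hxa : x = a + 1 := by linarith
        exact Or.inr ⟨hba', right_mem_gI.mp (hxa ▸ hx), left_mem_gI.mp (hxb ▸ hy)⟩
  · rintro ⟨h1 | ⟨h1, hr', hl⟩, h2 | ⟨h2, hr, hl'⟩⟩
    · set m := max a b with hm
      set M := min (a+1) (b+1) with hM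
      have hmM : m < M := by
        rw [hm, hM, max_lt_iff]
        constructor <;> rw [lt_min_iff] <;> constructor <;> linarith
      have ham : a ≤ m := le_max_left a b
      have hbm : b ≤ m := le_max_right a b
      have hMa : M ≤ a + 1 := min_le_left _ _
      have hMb : M ≤ b + 1 := min_le_right _ _
      refine ⟨(m + M)/2, ⟨?_, ?_⟩, ⟨?_, ?_⟩⟩
      · have h : a < (m+M)/2 := by linarith
        cases l <;> simp [h, le_of_lt h]
      · have h : (m+M)/2 < a + 1 := by linarith
        cases r <;> simp [h, le_of_lt h]
      · have h : b < (m+M)/2 := by linarith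
        cases l' <;> simp [h, le_of_lt h]
      · have h : (m+M)/2 < b + 1 := by linarith
        cases r' <;> simp [h, le_of_lt h]
    · refine ⟨a + 1, right_mem_gI.mpr hr, ?_⟩
      rw [← h2]; exact left_mem_gI.mpr hl'
    · refine ⟨a, left_mem_gI.mpr hl, ?_⟩
      rw [h1]; exact right_mem_gI.mpr hr'
    · linarith

lemma gI_eq_iff {a b : ℝ} {l r l' r' : Bool} :
    gI a l r = gI b l' r' ↔ (a = b ∧ l = l' ∧ r = r') := by
  constructor
  · intro h
    have hab : a = b := by
      by_contra hne
      rcases lt_or_gt_of_ne hne with hlt | hgt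
      · have hm : (a + min b (a+1))/2 ∈ gI a l r := by
          have h1 : a < (a + min b (a+1))/2 := by
            have : a < min b (a+1) := lt_min hlt (by linarith)
            linarith
          have h2 : (a + min b (a+1))/2 < a + 1 := by
            have : min b (a+1) ≤ a + 1 := min_le_right _ _
            linarith
          constructor
          · cases l <;> simp [h1, le_of_lt h1]
          · cases r <;> simp [h2, le_of_lt h2]
        rw [h] at hm
        have h3 := gI_lower hm
        have : min b (a+1) ≤ b := min_le_left _ _
        linarith
      · have hm : (b + min a (b+1))/2 ∈ gI b l' r' := by
          have h1 : b < (b + min a (b+1))/2 := by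
            have : b < min a (b+1) := lt_min hgt (by linarith)
            linarith
          have h2 : (b + min a (b+1))/2 < b + 1 := by
            have : min a (b+1) ≤ b + 1 := min_le_right _ _
            linarith
          constructor
          · cases l' <;> simp [h1, le_of_lt h1]
          · cases r' <;> simp [h2, le_of_lt h2]
        rw [← h] at hm
        have h3 := gI_lower hm
        have : min a (b+1) ≤ a := min_le_left _ _
        linarith
    subst hab
    refine ⟨rfl, ?_, ?_⟩
    · have h1 : (a ∈ gI a l r) ↔ (a ∈ gI a l' r') := by rw [h]
      rw [left_mem_gI, left_mem_gI] at h1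
      cases l <;> cases l' <;> simp_all
    · have h1 : (a + 1 ∈ gI a l r) ↔ (a + 1 ∈ gI a l' r') := by rw [h]
      rw [right_mem_gI, right_mem_gI] at h1
      cases r <;> cases r' <;> simp_all
  · rintro ⟨rfl, rfl, rfl⟩; rfl

lemma image_addc_gI (c a : ℝ) (l r : Bool) : (fun x => x + c) '' gI a l r = gI (a + c) l r := by
  ext y
  simp only [mem_image]
  constructor
  · rintro ⟨x, hx, rfl⟩
    rcases hx with ⟨h1, h2⟩
    constructor
    · cases l <;> simp_all <;> linarith
    · cases r <;> simp_all <;> linarith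
  · rintro ⟨h1, h2⟩
    refine ⟨y - c, ⟨?_, ?_⟩, by ring⟩
    · cases l <;> simp_all <;> linarith
    · cases r <;> simp_all <;> linarith

lemma image_neg_gI (a : ℝ) (l r : Bool) : (fun x : ℝ => -x) '' gI a l r = gI (-a - 1) r l := by
  ext y
  simp only [mem_image]
  constructor
  · rintro ⟨x, hx, rfl⟩
    rcases hx with ⟨h1, h2⟩
    constructor
    · cases r <;> simp_all <;> linarith
    · cases l <;> simp_all <;> linarith
  · rintro ⟨h1, h2⟩
    refine ⟨-y, ⟨?_, ?_⟩, by ring⟩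
    · cases l <;> simp_all <;> linarith
    · cases r <;> simp_all <;> linarith

/-! ### Vertex helpers -/

def Pv (n : ℕ) (j : ℕ) (h : j < n + 2) : QVert (n+1) := Sum.inl ⟨j, h⟩
def Tv (n : ℕ) (i : ℕ) (h : i < n + 1) : QVert (n+1) := Sum.inr (Sum.inl ⟨i, h⟩)
def Ev (n : ℕ) (e : Fin 2) : QVert (n+1) := Sum.inr (Sum.inr e)

lemma adj_PP (n j j' : ℕ) (hj : j < n+2) (hj' : j' < n+2) :
    (Qgraph (n+1)).Adj (Pv n j hj) (Pv n j' hj') ↔ (j ≠ j' ∧ (j' = j + 1 ∨ j = j' + 1)) := by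
  simp [Pv, Qgraph, SimpleGraph.fromRel_adj, Qadj, Fin.ext_iff]

lemma adj_TP (n i j : ℕ) (hi : i < n+1) (hj : j < n+2) :
    (Qgraph (n+1)).Adj (Tv n i hi) (Pv n j hj) ↔ (j = i ∨ j = i + 1) := by
  simp [Pv, Tv, Qgraph, SimpleGraph.fromRel_adj, Qadj]

lemma adj_PT (n j i : ℕ) (hj : j < n+2) (hi : i < n+1) :
    (Qgraph (n+1)).Adj (Pv n j hj) (Tv n i hi) ↔ (j = i ∨ j = i + 1) := by
  simp [Pv, Tv, Qgraph, SimpleGraph.fromRel_adj, Qadj]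

lemma adj_EP (n : ℕ) (e : Fin 2) (j : ℕ) (hj : j < n+2) :
    (Qgraph (n+1)).Adj (Ev n e) (Pv n j hj) ↔ j = 0 := by
  simp [Pv, Ev, Qgraph, SimpleGraph.fromRel_adj, Qadj]

lemma adj_PE (n : ℕ) (j : ℕ) (hj : j < n+2) (e : Fin 2) :
    (Qgraph (n+1)).Adj (Pv n j hj) (Ev n e) ↔ j = 0 := by
  simp [Pv, Ev, Qgraph, SimpleGraph.fromRel_adj, Qadj]

lemma nadj_TT (n i i' : ℕ) (hi : i < n+1) (hi' : i' < n+1) :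
    ¬ (Qgraph (n+1)).Adj (Tv n i hi) (Tv n i' hi') := by
  simp [Tv, Qgraph, SimpleGraph.fromRel_adj, Qadj]

lemma nadj_EE (n : ℕ) (e e' : Fin 2) : ¬ (Qgraph (n+1)).Adj (Ev n e) (Ev n e') := by
  simp [Ev, Qgraph, SimpleGraph.fromRel_adj, Qadj]

lemma nadj_TE (n i : ℕ) (hi : i < n+1) (e : Fin 2) :
    ¬ (Qgraph (n+1)).Adj (Tv n i hi) (Ev n e) := by
  simp [Tv, Ev, Qgraph, SimpleGraph.fromRel_adj, Qadj]

lemma Pv_ne (n j j' : ℕ) (hj : j < n+2) (hj' : j' < n+2) (h : j ≠ j') :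
    Pv n j hj ≠ Pv n j' hj' := by
  simp [Pv, Fin.ext_iff]; omega

lemma Pv_ne_Tv (n j : ℕ) (hj : j < n+2) (i : ℕ) (hi : i < n+1) : Pv n j hj ≠ Tv n i hi := by
  simp [Pv, Tv]

lemma Pv_ne_Ev (n j : ℕ) (hj : j < n+2) (e : Fin 2) : Pv n j hj ≠ Ev n e := by
  simp [Pv, Ev]

lemma Tv_ne (n i i' : ℕ) (hi : i < n+1) (hi' : i' < n+1) (h : i ≠ i') :
    Tv n i hi ≠ Tv n i' hi' := by
  simp [Tv, Fin.ext_iff]; omega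

lemma Tv_ne_Ev (n i : ℕ) (hi : i < n+1) (e : Fin 2) : Tv n i hi ≠ Ev n e := by
  simp [Tv, Ev]

lemma Ev_ne (n : ℕ) (e e' : Fin 2) (h : e ≠ e') : Ev n e ≠ Ev n e' := by
  simp [Ev]; exact h

lemma fin2_cases (e el er : Fin 2) (h : el ≠ er) : e = el ∨ e = er := by
  revert e el er; decide

lemma qvert_cases (n : ℕ) (v : QVert (n+1)) :
    (∃ j h, v = Pv n j h) ∨ (∃ i h, v = Tv n i h) ∨ (∃ e, v = Ev n e) := by
  rcases v with m | (i | e)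
  · exact Or.inl ⟨m, m.2, by simp [Pv]⟩
  · exact Or.inr (Or.inl ⟨i, i.2, by simp [Tv]⟩)
  · exact Or.inr (Or.inr ⟨e, rfl⟩)

/-! ### Representation tools -/

section tools
variable {V : Type*} {G : SimpleGraph V} {f : V → Set ℝ} {X : V → ℝ} {L R : V → Bool}

variable (hf : ∀ v, f v = gI (X v) (L v) (R v)) (hrep : IsIntervalRep G f)

include hf hrep

lemma adj_tch (u v : V) (hne : u ≠ v) (hadj : G.Adj u v) :
    (X u < X v + 1 ∨ (X u = X v + 1 ∧ R v = true ∧ L u = true)) ∧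
    (X v < X u + 1 ∨ (X v = X u + 1 ∧ R u = true ∧ L v = true)) := by
  have h := (hrep u v hne).mp hadj
  rw [hf u, hf v] at h
  exact (gI_inter_iff _ _ _ _ _ _).mp h

lemma adj_weak (u v : V) (hne : u ≠ v) (hadj : G.Adj u v) :
    X u ≤ X v + 1 ∧ X v ≤ X u + 1 := by
  rcases adj_tch hf hrep u v hne hadj with ⟨h1, h2⟩
  constructor
  · rcases h1 with h | ⟨h, _⟩ <;> linarith
  · rcases h2 with h | ⟨h, _⟩ <;> linarith

lemma adj_eq1 (u v : V) (hne : u ≠ v) (hadj : G.Adj u v) (heq : X u = X v + 1) :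
    R v = true ∧ L u = true := by
  rcases (adj_tch hf hrep u v hne hadj).1 with h | ⟨_, h2, h3⟩
  · linarith
  · exact ⟨h2, h3⟩

lemma sepG (u v : V) (hne : u ≠ v) (hnadj : ¬ G.Adj u v) :
    (X v + 1 ≤ X u ∧ (X u = X v + 1 → ¬(R v = true ∧ L u = true))) ∨
    (X u + 1 ≤ X v ∧ (X v = X u + 1 → ¬(R u = true ∧ L v = true))) := by
  have h : ¬ ((X u < X v + 1 ∨ (X u = X v + 1 ∧ R v = true ∧ L u = true)) ∧
      (X v < X u + 1 ∨ (X v = X u + 1 ∧ R u = true ∧ L v = true))) := by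
    intro hc
    exact hnadj ((hrep u v hne).mpr (by
      rw [hf u, hf v]; exact (gI_inter_iff _ _ _ _ _ _).mpr hc))
  by_cases h1 : X u < X v + 1
  · right
    by_cases h2 : X v < X u + 1
    · exact absurd ⟨Or.inl h1, Or.inl h2⟩ h
    · refine ⟨by linarith [not_lt.mp h2], ?_⟩
      intro heq hc
      exact h ⟨Or.inl h1, Or.inr ⟨heq, hc.1, hc.2⟩⟩
  · left
    refine ⟨by linarith [not_lt.mp h1], ?_⟩
    intro heq hc
    by_cases h2 : X v < X u + 1
    · exact h ⟨Or.inr ⟨heq, hc.1, hc.2⟩, Or.inl h2⟩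
    · linarith [not_lt.mp h1, not_lt.mp h2]

end tools

def Can (n : ℕ) (A : Set ℝ) : Set (Set ℝ) :=
  insert A ({Set.Icc 1 2, Set.Ioo 1 2} ∪
    {s : Set ℝ | ∃ i : ℕ, 2 ≤ i ∧ i ≤ n + 2 ∧
      (s = Set.Icc (i : ℝ) (i + 1) ∨ s = Set.Ico (i : ℝ) (i + 1))})

lemma coreI (n : ℕ) (f : QVert (n+1) → Set ℝ) (X : QVert (n+1) → ℝ)
    (L R : QVert (n+1) → Bool)
    (hf : ∀ v, f v = gI (X v) (L v) (R v))
    (hinj : Function.Injective f)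
    (hrep : IsIntervalRep (Qgraph (n+1)) f)
    (hp1 : ∀ (hx : 1 < n+2) (hy : 0 < n+2), X (Pv n 1 hx) = X (Pv n 0 hy) + 1) :
    ∃ c : ℝ, ∃ A : Set ℝ, (A = Set.Icc 0 1 ∨ A = Set.Ioc 0 1) ∧
      Set.range f = (fun s => (fun x : ℝ => x + c) '' s) '' Can n A := by
  have h0 : (0:ℕ) < n+2 := by omega
  have h1 : (1:ℕ) < n+2 := by omega
  have h0t : (0:ℕ) < n+1 := by omega
  have key : ∀ el er : Fin 2, el ≠ er →
      X (Ev n el) + 1 ≤ X (Ev n er) →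
      (X (Ev n er) = X (Ev n el) + 1 → ¬(R (Ev n el) = true ∧ L (Ev n er) = true)) →
      ∃ c : ℝ, ∃ A : Set ℝ, (A = Set.Icc 0 1 ∨ A = Set.Ioc 0 1) ∧
        Set.range f = (fun s => (fun x : ℝ => x + c) '' s) '' Can n A := by
    intro el er hne hord hcnd
    -- pendant weak bounds
    have hELP0adj : (Qgraph (n+1)).Adj (Ev n el) (Pv n 0 h0) := (adj_EP n el 0 h0).mpr rfl
    have hERP0adj : (Qgraph (n+1)).Adj (Ev n er) (Pv n 0 h0) := (adj_EP n er 0 h0).mpr rfl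
    have wEL := adj_weak hf hrep _ _ (Ne.symm (Pv_ne_Ev n 0 h0 el)) hELP0adj
    have wER := adj_weak hf hrep _ _ (Ne.symm (Pv_ne_Ev n 0 h0 er)) hERP0adj
    -- P1 is not adjacent to er ⇒ pendants pinned
    have hP1nER : ¬ (Qgraph (n+1)).Adj (Pv n 1 h1) (Ev n er) := by rw [adj_PE]; omega
    rcases sepG hf hrep (Pv n 1 h1) (Ev n er) (Pv_ne_Ev n 1 h1 er) hP1nER with ⟨hge, hcd⟩ | ⟨hge, _⟩
    swap
    · exfalso; rw [hp1 h1 h0] at hge; linarith [wER.1]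
    have hXER : X (Ev n er) = X (Pv n 0 h0) := by
      linarith [wEL.2, hord, hge, hp1 h1 h0]
    have hXEL : X (Ev n el) = X (Pv n 0 h0) - 1 := by
      linarith [wEL.2, hord, hge, hp1 h1 h0]
    have hcd' : ¬ (R (Ev n er) = true ∧ L (Pv n 1 h1) = true) :=
      hcd (by rw [hp1 h1 h0, hXER])
    have hpcd : ¬ (R (Ev n el) = true ∧ L (Ev n er) = true) := hcnd (by linarith)
    -- P0 touches el exactly at distance 1
    have hP0EL : (Qgraph (n+1)).Adj (Pv n 0 h0) (Ev n el) := (adj_PE n 0 h0 el).mpr rfl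
    obtain ⟨hREL, hLP0⟩ := adj_eq1 hf hrep _ _ (Pv_ne_Ev n 0 h0 el) hP0EL (by rw [hXEL]; ring)
    have hLER : L (Ev n er) = false := by
      cases hLERc : L (Ev n er)
      · rfl
      · exact absurd ⟨hREL, hLERc⟩ hpcd
    -- P1 ~ P0 at distance exactly 1
    have hP1P0 : (Qgraph (n+1)).Adj (Pv n 1 h1) (Pv n 0 h0) := (adj_PP n 1 0 h1 h0).mpr (by omega)
    obtain ⟨hRP0, hLP1⟩ := adj_eq1 hf hrep _ _ (Pv_ne n 1 0 h1 h0 (by omega)) hP1P0 (hp1 h1 h0)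
    have hRER : R (Ev n er) = false := by
      cases hc : R (Ev n er)
      · rfl
      · exact absurd ⟨hc, hLP1⟩ hcd'
    -- T0 pinned at X P0 + 1
    have hT0P1 : (Qgraph (n+1)).Adj (Tv n 0 h0t) (Pv n 1 h1) := (adj_TP n 0 1 h0t h1).mpr (by omega)
    have hT0P0 : (Qgraph (n+1)).Adj (Tv n 0 h0t) (Pv n 0 h0) := (adj_TP n 0 0 h0t h0).mpr (by omega)
    have wT1 := adj_weak hf hrep _ _ (Ne.symm (Pv_ne_Tv n 1 h1 0 h0t)) hT0P1
    have wT0 := adj_weak hf hrep _ _ (Ne.symm (Pv_ne_Tv n 0 h0 0 h0t)) hT0P0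
    rcases sepG hf hrep (Tv n 0 h0t) (Ev n er) (Tv_ne_Ev n 0 h0t er) (nadj_TE n 0 h0t er)
      with ⟨hge2, _⟩ | ⟨hge2, _⟩
    swap
    · exfalso; linarith [wT1.2, hp1 h1 h0, hXER]
    have hXT0 : X (Tv n 0 h0t) = X (Pv n 0 h0) + 1 := by linarith [wT0.1, hXER]
    obtain ⟨_, hLT0⟩ := adj_eq1 hf hrep _ _ (Ne.symm (Pv_ne_Tv n 0 h0 0 h0t)) hT0P0 hXT0
    -- the inductive propagation along the path
    have main : ∀ m, m ≤ n → ∀ (q1 : m + 1 < n+2) (q2 : m < n+1) (q0 : m < n+2),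
        X (Pv n (m+1) q1) = X (Pv n 0 h0) + m + 1 ∧ L (Pv n (m+1) q1) = true ∧
        X (Tv n m q2) = X (Pv n 0 h0) + m + 1 ∧ L (Tv n m q2) = true ∧
        X (Pv n m q0) = X (Pv n 0 h0) + m := by
      intro m
      induction m with
      | zero =>
        intro _ q1 q2 q0
        refine ⟨?_, hLP1, ?_, hLT0, ?_⟩
        · show X (Pv n 1 q1) = X (Pv n 0 h0) + (0:ℕ) + 1
          rw [hp1 q1 h0]; norm_num
        · show X (Tv n 0 q2) = X (Pv n 0 h0) + (0:ℕ) + 1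
          rw [hXT0]; norm_num
        · show X (Pv n 0 q0) = X (Pv n 0 h0) + (0:ℕ)
          norm_num
      | succ m ih =>
        intro hm q1 q2 q0
        have hb1 : m + 1 < n + 2 := by omega
        have hbt : m < n + 1 := by omega
        have hb0 : m < n + 2 := by omega
        obtain ⟨hXp, hLp, hXt, hLt, hXpm⟩ := ih (by omega) hb1 hbt hb0
        -- z = P_{m+2}
        have hadjz : (Qgraph (n+1)).Adj (Pv n (m+2) q1) (Pv n (m+1) hb1) :=
          (adj_PP n (m+2) (m+1) q1 hb1).mpr (by omega)
        have wz := adj_weak hf hrep _ _ (Pv_ne n (m+2) (m+1) q1 hb1 (by omega)) hadjz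
        have hnz : ¬ (Qgraph (n+1)).Adj (Pv n (m+2) q1) (Tv n m hbt) := by
          rw [adj_PT]; omega
        have hnzp : ¬ (Qgraph (n+1)).Adj (Pv n (m+2) q1) (Pv n m hb0) := by
          rw [adj_PP]; omega
        rcases sepG hf hrep _ _ (Pv_ne_Tv n (m+2) q1 m hbt) hnz with ⟨hge3, hcd3⟩ | ⟨hge3, _⟩
        swap
        · exfalso
          rcases sepG hf hrep _ _ (Pv_ne n (m+2) m q1 hb0 (by omega)) hnzp
            with ⟨hge4, _⟩ | ⟨hge4, _⟩
          · linarith [hXt, hXpm]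
          · linarith [wz.2, hXp, hXpm]
        have hXz : X (Pv n (m+2) q1) = X (Pv n 0 h0) + m + 2 := by
          linarith [wz.1, hXp, hXt]
        obtain ⟨hRp1, hLz⟩ := adj_eq1 hf hrep _ _ (Pv_ne n (m+2) (m+1) q1 hb1 (by omega))
          hadjz (by rw [hXz, hXp]; ring)
        -- z' = T_{m+1}
        have hadjt2 : (Qgraph (n+1)).Adj (Tv n (m+1) q2) (Pv n (m+2) q1) :=
          (adj_TP n (m+1) (m+2) q2 q1).mpr (by omega)
        have hadjt1 : (Qgraph (n+1)).Adj (Tv n (m+1) q2) (Pv n (m+1) hb1) :=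
          (adj_TP n (m+1) (m+1) q2 hb1).mpr (by omega)
        have wt2 := adj_weak hf hrep _ _ (Ne.symm (Pv_ne_Tv n (m+2) q1 (m+1) q2)) hadjt2
        have wt1 := adj_weak hf hrep _ _ (Ne.symm (Pv_ne_Tv n (m+1) hb1 (m+1) q2)) hadjt1
        rcases sepG hf hrep _ _ (Tv_ne n (m+1) m q2 hbt (by omega)) (nadj_TT n (m+1) m q2 hbt)
          with ⟨hge5, _⟩ | ⟨hge5, _⟩
        swap
        · exfalso; linarith [wt2.2, hXz, hXt]
        have hXt' : X (Tv n (m+1) q2) = X (Pv n 0 h0) + m + 2 := by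
          linarith [wt1.1, hXt, hXp]
        obtain ⟨_, hLt'⟩ := adj_eq1 hf hrep _ _ (Ne.symm (Pv_ne_Tv n (m+1) hb1 (m+1) q2))
          hadjt1 (by rw [hXt', hXp]; ring)
        refine ⟨?_, hLz, ?_, hLt', ?_⟩
        · exact hXz.trans (by push_cast; ring)
        · exact hXt'.trans (by push_cast; ring)
        · exact hXp.trans (by push_cast; ring)
    -- R-values of the twin pair at each position differ
    have hRne : ∀ m, m ≤ n → ∀ (q1 : m + 1 < n+2) (q2 : m < n+1),
        R (Pv n (m+1) q1) ≠ R (Tv n m q2) := by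
      intro m hm q1 q2 hEq
      obtain ⟨hXp, hLp, hXt, hLt, _⟩ := main m hm q1 q2 (by omega)
      exact Pv_ne_Tv n (m+1) q1 m q2
        (hinj (by rw [hf, hf, hXp, hXt, hLp, hLt, hEq]))
    -- assemble the range description
    refine ⟨X (Pv n 0 h0) - 1, gI 0 (L (Ev n el)) true, ?_, ?_⟩
    · cases hb : L (Ev n el)
      · right; rw [gI_ft]; norm_num
      · left; rw [gI_tt]; norm_num
    -- range equality
    have e0 : (fun x : ℝ => x + (X (Pv n 0 h0) - 1)) '' gI 0 (L (Ev n el)) true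
        = gI (X (Pv n 0 h0) - 1) (L (Ev n el)) true := by
      rw [image_addc_gI]; exact gI_eq_iff.mpr ⟨by ring, rfl, rfl⟩
    have e1 : (fun x : ℝ => x + (X (Pv n 0 h0) - 1)) '' Set.Icc 1 2
        = gI (X (Pv n 0 h0)) true true := by
      rw [show (Set.Icc (1:ℝ) 2) = gI 1 true true from by rw [gI_tt]; norm_num, image_addc_gI]
      exact gI_eq_iff.mpr ⟨by ring, rfl, rfl⟩
    have e2 : (fun x : ℝ => x + (X (Pv n 0 h0) - 1)) '' Set.Ioo 1 2
        = gI (X (Pv n 0 h0)) false false := by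
      rw [show (Set.Ioo (1:ℝ) 2) = gI 1 false false from by rw [gI_ff]; norm_num, image_addc_gI]
      exact gI_eq_iff.mpr ⟨by ring, rfl, rfl⟩
    have eSS : (fun s => (fun x : ℝ => x + (X (Pv n 0 h0) - 1)) '' s) ''
        {s : Set ℝ | ∃ i : ℕ, 2 ≤ i ∧ i ≤ n + 2 ∧
          (s = Set.Icc (i : ℝ) (i + 1) ∨ s = Set.Ico (i : ℝ) (i + 1))}
        = {s : Set ℝ | ∃ m : ℕ, m ≤ n ∧
            (s = gI (X (Pv n 0 h0) + m + 1) true true ∨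
             s = gI (X (Pv n 0 h0) + m + 1) true false)} := by
      ext s
      simp only [mem_image, mem_setOf_eq]
      constructor
      · rintro ⟨t, ⟨i, h2i, hin, ht | ht⟩, rfl⟩
        · refine ⟨i - 2, by omega, Or.inl ?_⟩
          rw [ht, show (Set.Icc (i:ℝ) ((i:ℝ)+1)) = gI i true true from (gI_tt _).symm,
            image_addc_gI]
          refine gI_eq_iff.mpr ⟨?_, rfl, rfl⟩
          have hc : ((i - 2 : ℕ) : ℝ) = (i : ℝ) - 2 := by
            push_cast [Nat.cast_sub h2i]; ring
          rw [hc]; ring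
        · refine ⟨i - 2, by omega, Or.inr ?_⟩
          rw [ht, show (Set.Ico (i:ℝ) ((i:ℝ)+1)) = gI i true false from (gI_tf _).symm,
            image_addc_gI]
          refine gI_eq_iff.mpr ⟨?_, rfl, rfl⟩
          have hc : ((i - 2 : ℕ) : ℝ) = (i : ℝ) - 2 := by
            push_cast [Nat.cast_sub h2i]; ring
          rw [hc]; ring
      · rintro ⟨m, hm, hs | hs⟩
        · refine ⟨Set.Icc ((m+2 : ℕ):ℝ) (((m+2:ℕ):ℝ) + 1), ⟨m+2, by omega, by omega, Or.inl rfl⟩, ?_⟩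
          rw [show (Set.Icc ((m+2:ℕ):ℝ) (((m+2:ℕ):ℝ)+1)) = gI ((m+2:ℕ):ℝ) true true from
            (gI_tt _).symm, image_addc_gI, hs]
          exact (gI_eq_iff.mpr ⟨by push_cast; ring, rfl, rfl⟩).symm
        · refine ⟨Set.Ico ((m+2 : ℕ):ℝ) (((m+2:ℕ):ℝ) + 1), ⟨m+2, by omega, by omega, Or.inr rfl⟩, ?_⟩
          rw [show (Set.Ico ((m+2:ℕ):ℝ) (((m+2:ℕ):ℝ)+1)) = gI ((m+2:ℕ):ℝ) true false from
            (gI_tf _).symm, image_addc_gI, hs]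
          exact (gI_eq_iff.mpr ⟨by push_cast; ring, rfl, rfl⟩).symm
    rw [Can, image_insert_eq, image_union, image_insert_eq, image_singleton, e0, e1, e2, eSS]
    ext s
    simp only [mem_range, mem_insert_iff, mem_union, mem_setOf_eq, mem_singleton_iff]
    constructor
    · rintro ⟨v, rfl⟩
      rcases qvert_cases n v with ⟨j, hjlt, rfl⟩ | ⟨i, hilt, rfl⟩ | ⟨e, rfl⟩
      · rcases Nat.eq_zero_or_pos j with rfl | hj
        · right; left; left
          rw [hf]
          exact gI_eq_iff.mpr ⟨rfl, hLP0, hRP0⟩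
        · obtain ⟨m, rfl⟩ : ∃ m, j = m + 1 := ⟨j - 1, by omega⟩
          have hm : m ≤ n := by omega
          obtain ⟨hXp, hLp, _, _, _⟩ := main m hm hjlt (by omega) (by omega)
          right; right
          refine ⟨m, hm, ?_⟩
          rw [hf]
          cases hR : R (Pv n (m+1) hjlt)
          · exact Or.inr (gI_eq_iff.mpr ⟨hXp, hLp, rfl⟩)
          · exact Or.inl (gI_eq_iff.mpr ⟨hXp, hLp, rfl⟩)
      · have hi : i ≤ n := by omega
        obtain ⟨_, _, hXt, hLt, _⟩ := main i hi (by omega) hilt (by omega)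
        right; right
        refine ⟨i, hi, ?_⟩
        rw [hf]
        cases hR : R (Tv n i hilt)
        · exact Or.inr (gI_eq_iff.mpr ⟨hXt, hLt, rfl⟩)
        · exact Or.inl (gI_eq_iff.mpr ⟨hXt, hLt, rfl⟩)
      · rcases fin2_cases e el er hne with rfl | rfl
        · left; rw [hf]
          exact gI_eq_iff.mpr ⟨hXEL, rfl, hREL⟩
        · right; left; right; rw [hf]
          exact gI_eq_iff.mpr ⟨hXER, hLER, hRER⟩
    · rintro (rfl | ((rfl | rfl) | ⟨m, hm, rfl | rfl⟩))
      · exact ⟨Ev n el, by rw [hf]; exact gI_eq_iff.mpr ⟨hXEL, rfl, hREL⟩⟩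
      · exact ⟨Pv n 0 h0, by rw [hf]; exact gI_eq_iff.mpr ⟨rfl, hLP0, hRP0⟩⟩
      · exact ⟨Ev n er, by rw [hf]; exact gI_eq_iff.mpr ⟨hXER, hLER, hRER⟩⟩
      · have q1 : m + 1 < n + 2 := by omega
        have q2 : m < n + 1 := by omega
        obtain ⟨hXp, hLp, hXt, hLt, _⟩ := main m hm q1 q2 (by omega)
        have hR := hRne m hm q1 q2
        cases hRp : R (Pv n (m+1) q1)
        · have hRt : R (Tv n m q2) = true := by
            cases hRtc : R (Tv n m q2)
            · exact absurd (hRp.trans hRtc.symm) hR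
            · rfl
          exact ⟨Tv n m q2, by rw [hf]; exact gI_eq_iff.mpr ⟨hXt, hLt, hRt⟩⟩
        · exact ⟨Pv n (m+1) q1, by rw [hf]; exact gI_eq_iff.mpr ⟨hXp, hLp, hRp⟩⟩
      · have q1 : m + 1 < n + 2 := by omega
        have q2 : m < n + 1 := by omega
        obtain ⟨hXp, hLp, hXt, hLt, _⟩ := main m hm q1 q2 (by omega)
        have hR := hRne m hm q1 q2
        cases hRp : R (Pv n (m+1) q1)
        · exact ⟨Pv n (m+1) q1, by rw [hf]; exact gI_eq_iff.mpr ⟨hXp, hLp, hRp⟩⟩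
        · have hRt : R (Tv n m q2) = false := by
            cases hRtc : R (Tv n m q2)
            · rfl
            · exact absurd (hRp.trans hRtc.symm) hR
          exact ⟨Tv n m q2, by rw [hf]; exact gI_eq_iff.mpr ⟨hXt, hLt, hRt⟩⟩
  -- dispatch by pendant order
  rcases sepG hf hrep (Ev n 1) (Ev n 0) (Ev_ne n 1 0 (by decide)) (nadj_EE n 1 0)
    with ⟨hh1, hh2⟩ | ⟨hh1, hh2⟩
  · exact key 0 1 (by decide) hh1 hh2
  · exact key 1 0 (by decide) hh1 hh2

/-- Lemma (b): for k = n+1 ≥ 1, every injective intersection representation of Q_k by unit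
intervals arises by translation or reflection from the representation whose intervals are:
[0,1] or (0,1]; [1,2] and (1,2); and [i,i+1] and [i,i+1) for 2 ≤ i ≤ k+1. -/
theorem Qk_representation_unique (n : ℕ) (f : QVert (n + 1) → Set ℝ)
    (hinj : Function.Injective f)
    (hrep : IsIntervalRep (Qgraph (n + 1)) f)
    (hunit : ∀ v, IsUnitInterval (f v)) :
    ∃ h : ℝ → ℝ, ((∃ c : ℝ, ∀ x, h x = x + c) ∨ (∃ c : ℝ, ∀ x, h x = c - x)) ∧
      ∃ A : Set ℝ, (A = Set.Icc 0 1 ∨ A = Set.Ioc 0 1) ∧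
        Set.range f = (fun s => h '' s) ''
          (insert A ({Set.Icc 1 2, Set.Ioo 1 2} ∪
            {s : Set ℝ | ∃ i : ℕ, 2 ≤ i ∧ i ≤ n + 2 ∧
              (s = Set.Icc (i : ℝ) (i + 1) ∨ s = Set.Ico (i : ℝ) (i + 1))})) := by
  classical
  have hcfg : ∀ v, ∃ x l r, f v = gI x l r := fun v => (unit_iff (f v)).mp (hunit v)
  choose X L R hf using hcfg
  have h0 : (0:ℕ) < n+2 := by omega
  have h1 : (1:ℕ) < n+2 := by omega
  have h0t : (0:ℕ) < n+1 := by omega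
  have tri : X (Pv n 1 h1) = X (Pv n 0 h0) + 1 ∨ X (Pv n 1 h1) = X (Pv n 0 h0) - 1 := by
    have keyt : ∀ el er : Fin 2, el ≠ er →
        X (Ev n el) + 1 ≤ X (Ev n er) →
        (X (Ev n er) = X (Ev n el) + 1 → ¬(R (Ev n el) = true ∧ L (Ev n er) = true)) →
        X (Pv n 1 h1) = X (Pv n 0 h0) + 1 ∨ X (Pv n 1 h1) = X (Pv n 0 h0) - 1 := by
      intro el er hne hord hcnd
      have hELP0adj : (Qgraph (n+1)).Adj (Ev n el) (Pv n 0 h0) := (adj_EP n el 0 h0).mpr rfl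
      have hERP0adj : (Qgraph (n+1)).Adj (Ev n er) (Pv n 0 h0) := (adj_EP n er 0 h0).mpr rfl
      have wEL := adj_weak hf hrep _ _ (Ne.symm (Pv_ne_Ev n 0 h0 el)) hELP0adj
      have wER := adj_weak hf hrep _ _ (Ne.symm (Pv_ne_Ev n 0 h0 er)) hERP0adj
      have hadjP1P0 : (Qgraph (n+1)).Adj (Pv n 1 h1) (Pv n 0 h0) :=
        (adj_PP n 1 0 h1 h0).mpr (by omega)
      have wP1 := adj_weak hf hrep _ _ (Pv_ne n 1 0 h1 h0 (by omega)) hadjP1P0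
      have hnl : ¬ (Qgraph (n+1)).Adj (Pv n 1 h1) (Ev n el) := by rw [adj_PE]; omega
      have hnr : ¬ (Qgraph (n+1)).Adj (Pv n 1 h1) (Ev n er) := by rw [adj_PE]; omega
      rcases sepG hf hrep _ _ (Pv_ne_Ev n 1 h1 el) hnl with ⟨ha1, hc1⟩ | ⟨ha1, _⟩
      · rcases sepG hf hrep _ _ (Pv_ne_Ev n 1 h1 er) hnr with ⟨ha2, _⟩ | ⟨ha2, hc2⟩
        · left
          linarith [wEL.2, wER.1, wP1.1]
        · -- middle case : contradiction
          exfalso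
          have hXP1 : X (Pv n 1 h1) = X (Pv n 0 h0) := by linarith [wEL.2, wER.1]
          have hXel : X (Ev n el) = X (Pv n 0 h0) - 1 := by linarith [wEL.2, wER.1]
          have hXer : X (Ev n er) = X (Pv n 0 h0) + 1 := by linarith [wEL.2, wER.1]
          have hT0P1 : (Qgraph (n+1)).Adj (Tv n 0 h0t) (Pv n 1 h1) :=
            (adj_TP n 0 1 h0t h1).mpr (by omega)
          have hT0P0 : (Qgraph (n+1)).Adj (Tv n 0 h0t) (Pv n 0 h0) :=
            (adj_TP n 0 0 h0t h0).mpr (by omega)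
          have wT0 := adj_weak hf hrep _ _ (Ne.symm (Pv_ne_Tv n 0 h0 0 h0t)) hT0P0
          rcases sepG hf hrep _ _ (Tv_ne_Ev n 0 h0t el) (nadj_TE n 0 h0t el)
            with ⟨hb1, hd1⟩ | ⟨hb1, _⟩
          swap
          · linarith [wT0.2]
          rcases sepG hf hrep _ _ (Tv_ne_Ev n 0 h0t er) (nadj_TE n 0 h0t er)
            with ⟨hb2, _⟩ | ⟨hb2, hd2⟩
          · linarith [wT0.1]
          have hXT0 : X (Tv n 0 h0t) = X (Pv n 0 h0) := by linarith
          have hP0EL : (Qgraph (n+1)).Adj (Pv n 0 h0) (Ev n el) := (adj_PE n 0 h0 el).mpr rfl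
          obtain ⟨hREL, hLP0⟩ := adj_eq1 hf hrep _ _ (Pv_ne_Ev n 0 h0 el) hP0EL
            (by rw [hXel]; ring)
          obtain ⟨hRP0, hLer⟩ := adj_eq1 hf hrep _ _ (Ne.symm (Pv_ne_Ev n 0 h0 er)) hERP0adj
            (by rw [hXer])
          have hLP1 : L (Pv n 1 h1) = false := by
            have hx := hc1 (by linarith)
            cases hcL : L (Pv n 1 h1)
            · rfl
            · exact absurd ⟨hREL, hcL⟩ hx
          have hRP1 : R (Pv n 1 h1) = false := by
            have hx := hc2 (by linarith)
            cases hcR : R (Pv n 1 h1)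
            · rfl
            · exact absurd ⟨hcR, hLer⟩ hx
          have hLT0 : L (Tv n 0 h0t) = false := by
            have hx := hd1 (by linarith)
            cases hcL : L (Tv n 0 h0t)
            · rfl
            · exact absurd ⟨hREL, hcL⟩ hx
          have hRT0 : R (Tv n 0 h0t) = false := by
            have hx := hd2 (by linarith)
            cases hcR : R (Tv n 0 h0t)
            · rfl
            · exact absurd ⟨hcR, hLer⟩ hx
          exact Pv_ne_Tv n 1 h1 0 h0t
            (hinj (by rw [hf, hf, hXP1, hXT0, hLP1, hLT0, hRP1, hRT0]))
      · right
        linarith [wER.1, wP1.2]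
    rcases sepG hf hrep (Ev n 1) (Ev n 0) (Ev_ne n 1 0 (by decide)) (nadj_EE n 1 0)
      with ⟨hh1, hh2⟩ | ⟨hh1, hh2⟩
    · exact keyt 0 1 (by decide) hh1 hh2
    · exact keyt 1 0 (by decide) hh1 hh2
  rcases tri with hcase | hcase
  · obtain ⟨c, A, hA, hrange⟩ := coreI n f X L R hf hinj hrep (fun _ _ => hcase)
    exact ⟨fun x => x + c, Or.inl ⟨c, fun _ => rfl⟩, A, hA, hrange⟩
  · -- reflected configuration
    have hinjg : Function.Injective (fun v => (fun x : ℝ => -x) '' f v) := by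
      intro u v huv
      apply hinj
      have h2 := congrArg (Set.image (fun x : ℝ => -x)) huv
      simpa only [image_image, neg_neg, image_id'] using h2
    have hrepg : IsIntervalRep (Qgraph (n+1)) (fun v => (fun x : ℝ => -x) '' f v) := by
      intro u v hne
      rw [hrep u v hne]
      constructor
      · rintro ⟨x, hx1, hx2⟩
        exact ⟨-x, ⟨x, hx1, rfl⟩, ⟨x, hx2, rfl⟩⟩
      · rintro ⟨y, ⟨x1, hx1, he1⟩, x2, hx2, he2⟩
        have hx12 : x1 = x2 := by
          have hne2 : -x1 = -x2 := he1.trans he2.symm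
          linarith
        exact ⟨x1, hx1, hx12 ▸ hx2⟩
    obtain ⟨c, A, hA, hrange⟩ := coreI n (fun v => (fun x : ℝ => -x) '' f v)
      (fun v => -(X v) - 1) R L
      (fun v => by
        show (fun x : ℝ => -x) '' f v = gI (-(X v) - 1) (R v) (L v)
        rw [hf v, image_neg_gI])
      hinjg hrepg
      (fun hx hy => by
        show -(X (Pv n 1 h1)) - 1 = -(X (Pv n 0 h0)) - 1 + 1
        linarith [hcase])
    refine ⟨fun x => -c - x, Or.inr ⟨-c, fun _ => rfl⟩, A, hA, ?_⟩
    have hrf : Set.range f = (fun s : Set ℝ => (fun x : ℝ => -x) '' s) ''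
        Set.range (fun v => (fun x : ℝ => -x) '' f v) := by
      rw [← Set.range_comp]
      have hcmp : ((fun s : Set ℝ => (fun x : ℝ => -x) '' s) ∘ fun v => (fun x : ℝ => -x) '' f v)
          = f := by
        funext v
        rw [Function.comp_apply, image_image]
        simp
      rw [hcmp]
    rw [hrf, hrange, ← image_comp]
    have hfun : ((fun s : Set ℝ => (fun x : ℝ => -x) '' s) ∘
        (fun s : Set ℝ => (fun x : ℝ => x + c) '' s))
        = (fun s : Set ℝ => (fun x : ℝ => -c - x) '' s) := by
      funext s
      rw [Function.comp_apply, image_image]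
      exact congrArg (· '' s) (funext fun x => by ring)
    rw [hfun]
    rfl
end

section
/- If G is a graph and G' is obtained from G by adding a twin of some vertex (a new vertex v' with N[v'] = N[v] for an existing vertex v), then G is a mixed unit interval graph if and only if G' is a mixed unit interval graph. -/
open Set

lemma IsUnitInterval.nonempty {s : Set ℝ} (h : IsUnitInterval s) : s.Nonempty := by
  obtain ⟨x, h | h | h | h⟩ := h <;> subst h <;>
    simp [Set.nonempty_Icc, Set.nonempty_Ioo, Set.nonempty_Ioc, Set.nonempty_Ico]

/-- Adding a twin of a vertex preserves being a mixed unit interval graph, and conversely. -/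
theorem mixed_unit_add_twin {V : Type*} (G : SimpleGraph V) (v : V)
    (G' : SimpleGraph (Option V))
    (h1 : ∀ a b : V, G'.Adj (some a) (some b) ↔ G.Adj a b)
    (h2 : ∀ a : V, G'.Adj none (some a) ↔ (a = v ∨ G.Adj v a)) :
    MixedUnitIntervalGraph G ↔ MixedUnitIntervalGraph G' := by
  constructor
  · rintro ⟨f, hrep, hunit⟩
    refine ⟨fun o => o.elim (f v) f, ?_, ?_⟩
    · have key : ∀ a : V, G'.Adj none (some a) ↔ (f v ∩ f a).Nonempty := by
        intro a
        rw [h2]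
        by_cases hav : a = v
        · subst hav
          simp only [true_or, true_iff, Set.inter_self]
          exact (hunit a).nonempty
        · constructor
          · rintro (h | h)
            · exact absurd h hav
            · exact (hrep v a (fun e => hav e.symm)).1 h
          · intro h
            exact Or.inr ((hrep v a (fun e => hav e.symm)).2 h)
      rintro (_ | a) (_ | b) hne
      · exact absurd rfl hne
      · simpa using key b
      · rw [G'.adj_comm, Set.inter_comm]
        simpa using key a
      · have hab : a ≠ b := fun e => hne (by rw [e])
        simpa [h1] using hrep a b hab
    · rintro (_ | a) <;> simp [hunit]
  · rintro ⟨f, hrep, hunit⟩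
    refine ⟨fun a => f (some a), ?_, fun a => hunit (some a)⟩
    intro a b hab
    rw [← h1]
    exact hrep (some a) (some b) (by simpa using hab)
end
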